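/- arXiv:1711.01933 — 5 statements merged into one kernel-verified Lean document; each statement's English description precedes it below -/
import Mathlib

section
/- For complex s with Re(s) > 0 and real τ, the integral ∫₀^∞ cos(τy)/cosh^{2s}(y/2) dy equals 2^{2s-1} Γ(s+iτ)Γ(s−iτ)/Γ(2s). -/
open Complex Real MeasureTheory Set Filter

/-- Bessel function of the first kind of complex order `ν` at positive real argument `x`. -/
noncomputable def besselJ (ν : ℂ) (x : ℝ) : ℂ :=
  ∑' k : ℕ, ((-1 : ℂ) ^ k / ((k.factorial : ℂ) * Complex.Gamma (ν + k + 1))) *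
    ((x : ℂ) / 2) ^ (ν + 2 * (k : ℂ))

/-- Bessel function of the second kind of complex order `ν`. -/
noncomputable def besselY (ν : ℂ) (x : ℝ) : ℂ :=
  (besselJ ν x * Complex.cos ((π : ℂ) * ν) - besselJ (-ν) x) / Complex.sin ((π : ℂ) * ν)

/-- Modified Bessel function of the first kind of complex order `ν`. -/
noncomputable def besselI (ν : ℂ) (x : ℝ) : ℂ :=
  ∑' k : ℕ, (1 / ((k.factorial : ℂ) * Complex.Gamma (ν + k + 1))) *
    ((x : ℂ) / 2) ^ (ν + 2 * (k : ℂ))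

/-- Modified Bessel function of the second kind (Macdonald function). -/
noncomputable def besselK (ν : ℂ) (x : ℝ) : ℂ :=
  ((π : ℂ) / 2) * (besselI (-ν) x - besselI ν x) / Complex.sin ((π : ℂ) * ν)

/-- Anger function `𝐉_ν(z) = (1/π) ∫₀^π cos (ν θ − z sin θ) dθ`. -/
noncomputable def angerJ (ν : ℂ) (z : ℝ) : ℂ :=
  (1 / (π : ℂ)) * ∫ θ in (0 : ℝ)..π, Complex.cos (ν * (θ : ℂ) - (z : ℂ) * Real.sin θ)

/-- The Weber type kernel away from `τ = 0`. -/
noncomputable def weberW₀ (α x τ : ℝ) : ℝ :=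
  (besselJ ((α : ℂ) + τ * I) (Real.sqrt x) * besselY ((α : ℂ) - τ * I) (Real.sqrt x)).im /
    Real.sinh (π * τ)

/-- The Weber type kernel `W_α(x,τ) = Im[J_{α+iτ}(√x) Y_{α−iτ}(√x)]/sinh(πτ)`,
defined at `τ = 0` by continuity. -/
noncomputable def weberW (α x τ : ℝ) : ℝ :=
  if τ = 0 then limUnder (nhdsWithin 0 {(0 : ℝ)}ᶜ) (weberW₀ α x)
  else weberW₀ α x τ

/-!
Substitute `u = sigmoid y = 1 / (1 + e^{-y})`. Then `u = e^{y/2} / (2 cosh (y/2))`,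
`1 - u = e^{-y/2} / (2 cosh (y/2))` and `du = u (1 - u) dy`, so
`e^{(a-b)y/2} / (2 cosh (y/2))^{a+b} dy = u^{a-1} (1-u)^{b-1} du`, and `y > 0` corresponds to
`1/2 < u < 1`. Writing `cos (τ y)` as the mean of `e^{± iτ y}` with `a, b = s ± iτ`, the two
exponentials give the Beta integrand at `u` and at `1 - u`, which together cover `(0, 1)`:
the integral is `2^{2s-1} B(s + iτ, s - iτ)`.
-/

lemma sigmoid_image_Ioi_zero : sigmoid '' Ioi 0 = Ioo (1 / 2) 1 := by
  ext u
  constructor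
  · rintro ⟨y, hy, rfl⟩
    refine ⟨?_, sigmoid_lt_one y⟩
    simpa [sigmoid_zero] using sigmoid_lt (mem_Ioi.mp hy)
  · intro hu
    obtain ⟨y, rfl⟩ : u ∈ range sigmoid := by
      rw [range_sigmoid]; exact ⟨by linarith [hu.1], hu.2⟩
    refine ⟨y, sigmoid_lt_iff.mp ?_, rfl⟩
    simpa [sigmoid_zero] using hu.1

lemma sigmoid_eq_exp_div_two_mul_cosh (y : ℝ) :
    sigmoid y = Real.exp (y / 2) / (2 * Real.cosh (y / 2)) := by
  rw [sigmoid_def, Real.cosh_eq]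
  have h : Real.exp (-y) = Real.exp (-(y / 2)) / Real.exp (y / 2) := by
    rw [← Real.exp_sub]; ring_nf
  rw [h]
  field_simp

lemma one_sub_sigmoid_eq_exp_div_two_mul_cosh (y : ℝ) :
    1 - sigmoid y = Real.exp (-y / 2) / (2 * Real.cosh (y / 2)) := by
  rw [← sigmoid_neg, sigmoid_eq_exp_div_two_mul_cosh, neg_div, Real.cosh_neg]

lemma ofReal_exp_div_cpow {c : ℝ} (hc : 0 < c) (x : ℝ) (w : ℂ) :
    ((Real.exp x / c : ℝ) : ℂ) ^ w = Complex.exp (x * w) / (c : ℂ) ^ w := by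
  have hc' : (c : ℂ) ≠ 0 := by exact_mod_cast hc.ne'
  have hx : ((Real.exp x / c : ℝ) : ℂ) ≠ 0 := Complex.ofReal_ne_zero.mpr (by positivity)
  rw [Complex.cpow_def_of_ne_zero hx, Complex.cpow_def_of_ne_zero hc',
    ← Complex.ofReal_log (by positivity), ← Complex.ofReal_log hc.le,
    Real.log_div (Real.exp_pos x).ne' hc.ne', Real.log_exp, ← Complex.exp_sub]
  push_cast
  ring_nf

noncomputable def betaKernel (a b : ℂ) (u : ℝ) : ℂ :=
  (u : ℂ) ^ (a - 1) * (1 - (u : ℂ)) ^ (b - 1)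

lemma betaKernel_one_sub (a b : ℂ) (u : ℝ) : betaKernel a b (1 - u) = betaKernel b a u := by
  simp only [betaKernel]
  push_cast
  rw [sub_sub_cancel, mul_comm]

lemma mul_betaKernel {u : ℝ} (hu0 : 0 < u) (hu1 : u < 1) (a b : ℂ) :
    ((u * (1 - u) : ℝ) : ℂ) * betaKernel a b u = (u : ℂ) ^ a * ((1 - u : ℝ) : ℂ) ^ b := by
  have hu : (u : ℂ) ≠ 0 := by exact_mod_cast hu0.ne'
  have hv : ((1 - u : ℝ) : ℂ) ≠ 0 := by exact_mod_cast (sub_pos.mpr hu1).ne'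
  simp only [betaKernel]
  rw [show 1 - (u : ℂ) = ((1 - u : ℝ) : ℂ) by push_cast; rfl, Complex.cpow_sub _ _ hu,
    Complex.cpow_sub _ _ hv, Complex.cpow_one, Complex.cpow_one, Complex.ofReal_mul]
  field_simp

lemma sigmoid_mul_one_sub_mul_betaKernel (a b : ℂ) (y : ℝ) :
    ((sigmoid y * (1 - sigmoid y) : ℝ) : ℂ) * betaKernel a b (sigmoid y) =
      Complex.exp ((a - b) * y / 2) / ((2 * Real.cosh (y / 2) : ℝ) : ℂ) ^ (a + b) := by
  have hc : 0 < 2 * Real.cosh (y / 2) := by positivity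
  have hc' : ((2 * Real.cosh (y / 2) : ℝ) : ℂ) ≠ 0 := by exact_mod_cast hc.ne'
  rw [mul_betaKernel (sigmoid_pos y) (sigmoid_lt_one y), one_sub_sigmoid_eq_exp_div_two_mul_cosh,
    sigmoid_eq_exp_div_two_mul_cosh, ofReal_exp_div_cpow hc, ofReal_exp_div_cpow hc,
    Complex.cpow_add _ _ hc', div_mul_div_comm, ← Complex.exp_add]
  push_cast
  ring_nf

lemma intervalIntegral_half_one_add_comp_one_sub {E : Type*} [NormedAddCommGroup E]
    [NormedSpace ℝ E] {f : ℝ → E} (hf : IntervalIntegrable f volume 0 1) :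
    ∫ u in (1 / 2 : ℝ)..1, (f u + f (1 - u)) = ∫ u in (0 : ℝ)..1, f u := by
  have half_mem : (1 / 2 : ℝ) ∈ uIcc 0 1 := by rw [uIcc_of_le zero_le_one]; norm_num
  have hf₁ : IntervalIntegrable f volume 0 (1 / 2) :=
    hf.mono_set (uIcc_subset_uIcc left_mem_uIcc half_mem)
  have hf₂ : IntervalIntegrable f volume (1 / 2) 1 :=
    hf.mono_set (uIcc_subset_uIcc half_mem right_mem_uIcc)
  have hf₃ : IntervalIntegrable (fun u ↦ f (1 - u)) volume (1 / 2) 1 := by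
    convert (hf₁.comp_sub_left 1).symm using 1 <;> norm_num
  rw [intervalIntegral.integral_add hf₂ hf₃, intervalIntegral.integral_comp_sub_left, add_comm]
  norm_num
  exact intervalIntegral.integral_add_adjacent_intervals hf₁ hf₂

theorem integral_Ioi_exp_add_exp_div_two_mul_cosh_cpow {a b : ℂ} (ha : 0 < a.re) (hb : 0 < b.re) :
    ∫ y in Ioi (0 : ℝ), (Complex.exp ((a - b) * y / 2) + Complex.exp ((b - a) * y / 2)) /
      ((2 * Real.cosh (y / 2) : ℝ) : ℂ) ^ (a + b) = betaIntegral a b := by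
  calc _ = ∫ y in Ioi (0 : ℝ), |sigmoid y * (1 - sigmoid y)| •
        (betaKernel a b (sigmoid y) + betaKernel b a (sigmoid y)) := by
        refine setIntegral_congr_fun measurableSet_Ioi fun y _ ↦ ?_
        rw [abs_of_pos (mul_pos (sigmoid_pos y) (sub_pos.mpr (sigmoid_lt_one y))),
          Complex.real_smul, mul_add, sigmoid_mul_one_sub_mul_betaKernel,
          sigmoid_mul_one_sub_mul_betaKernel, add_comm b a, add_div]
    _ = ∫ u in Ioo (1 / 2 : ℝ) 1, (betaKernel a b u + betaKernel b a u) := by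
        rw [← sigmoid_image_Ioi_zero, integral_image_eq_integral_abs_deriv_smul measurableSet_Ioi
          (fun y _ ↦ (hasDerivAt_sigmoid y).hasDerivWithinAt) sigmoid_injective.injOn]
    _ = ∫ u in (1 / 2 : ℝ)..1, (betaKernel a b u + betaKernel a b (1 - u)) := by
        rw [intervalIntegral.integral_of_le (by norm_num), integral_Ioc_eq_integral_Ioo]
        simp_rw [betaKernel_one_sub]
    _ = betaIntegral a b :=
        intervalIntegral_half_one_add_comp_one_sub (betaIntegral_convergent ha hb)

lemma ofReal_cos_div_cosh_cpow (s : ℂ) (τ y : ℝ) :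
    (Real.cos (τ * y) : ℂ) / (Real.cosh (y / 2) : ℂ) ^ (2 * s) =
      2 ^ (2 * s - 1) * ((Complex.exp (τ * y * I) + Complex.exp (-(τ * y * I))) /
        ((2 * Real.cosh (y / 2) : ℝ) : ℂ) ^ (2 * s)) := by
  rw [Complex.ofReal_mul, Complex.mul_cpow_ofReal_nonneg zero_le_two (Real.cosh_pos _).le,
    Complex.cpow_sub _ _ two_ne_zero, Complex.cpow_one, Complex.ofReal_cos, Complex.cos]
  have h2 : (2 : ℂ) ^ (2 * s) ≠ 0 := by simp
  field_simp
  push_cast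
  ring_nf

theorem stmt0 (s : ℂ) (hs : 0 < s.re) (τ : ℝ) :
    ∫ y in Ioi (0 : ℝ), (Real.cos (τ * y) : ℂ) / ((Real.cosh (y / 2) : ℂ)) ^ (2 * s)
      = 2 ^ (2 * s - 1) * Complex.Gamma (s + τ * I) * Complex.Gamma (s - τ * I) /
        Complex.Gamma (2 * s) := by
  have hΓ : Complex.Gamma (2 * s) ≠ 0 :=
    Complex.Gamma_ne_zero_of_re_pos (by simpa [Complex.mul_re] using hs)
  have hbeta := Complex.Gamma_mul_Gamma_eq_betaIntegral (s := s + τ * I) (t := s - τ * I)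
    (by simpa using hs) (by simpa using hs)
  have hsum : s + τ * I + (s - τ * I) = 2 * s := by ring
  have hexp := integral_Ioi_exp_add_exp_div_two_mul_cosh_cpow (a := s + τ * I) (b := s - τ * I)
    (by simpa using hs) (by simpa using hs)
  rw [hsum] at hbeta hexp
  calc _ = ∫ y in Ioi (0 : ℝ), 2 ^ (2 * s - 1) *
        ((Complex.exp ((s + τ * I - (s - τ * I)) * y / 2) +
          Complex.exp ((s - τ * I - (s + τ * I)) * y / 2)) /
          ((2 * Real.cosh (y / 2) : ℝ) : ℂ) ^ (2 * s)) := by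
        refine setIntegral_congr_fun measurableSet_Ioi fun y _ ↦ ?_
        rw [ofReal_cos_div_cosh_cpow]
        ring_nf
    _ = 2 ^ (2 * s - 1) * betaIntegral (s + τ * I) (s - τ * I) := by
        rw [integral_const_mul, hexp]
    _ = _ := by
        rw [mul_assoc _ (Complex.Gamma _), hbeta, mul_div_assoc, mul_div_cancel_left₀ _ hΓ]
end

section
/- For complex s with Re(s) > 0 and real τ > 0, the Fourier cosine transform identity ∫₀^∞ Γ(s+iτ')Γ(s−iτ') cos(τ'y) dτ' = π Γ(2s) / (2^{2s} cosh^{2s}(y/2)) holds (equivalently, the function τ ↦ Γ(s+iτ)Γ(s−iτ) and y ↦ π·2^{1−2s}Γ(2s)cosh^{−2s}(y/2) are Fourier cosine reciprocal). -/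
open Complex Real MeasureTheory Set Filter

section WeberProof

open FourierTransform

noncomputable def FF (s : ℂ) (u : ℝ) : ℂ :=
  Complex.exp ((-2 * s) * (Real.log (2 * Real.cosh (u/2)) : ℂ))

lemma cosh_half_pos (u : ℝ) : 0 < 2 * Real.cosh (u/2) := by positivity

lemma log_twocosh (u : ℝ) :
    Real.log (2 * Real.cosh (u/2)) = Real.log (1 + Real.exp u) - u/2 := by
  have h : 2 * Real.cosh (u/2) = Real.exp (-(u/2)) * (1 + Real.exp u) := by
    have h2 : Real.exp (u/2) = Real.exp (-(u/2)) * Real.exp u := by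
      rw [← Real.exp_add]; ring_nf
    rw [Real.cosh_eq]
    nlinarith [Real.exp_pos (-(u/2))]
  rw [h, Real.log_mul (Real.exp_ne_zero _) (by positivity), Real.log_exp]
  ring

lemma exp_abs_le_twocosh (u : ℝ) : Real.exp (|u|/2) ≤ 2 * Real.cosh (u/2) := by
  rw [Real.cosh_eq]
  rcases abs_cases u with ⟨h, _⟩ | ⟨h, _⟩ <;> rw [h] <;>
    [skip; rw [show -u/2 = -(u/2) by ring]] <;>
    nlinarith [Real.exp_pos (u/2), Real.exp_pos (-(u/2)), (Real.exp_pos (u/2)).le]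

lemma norm_FF (s : ℂ) (u : ℝ) :
    ‖FF s u‖ = Real.exp (-2 * s.re * Real.log (2 * Real.cosh (u/2))) := by
  rw [FF, Complex.norm_exp]
  congr 1
  simp [Complex.mul_re]

lemma norm_FF_le (s : ℂ) (hs : 0 < s.re) (u : ℝ) :
    ‖FF s u‖ ≤ Real.exp (-s.re * |u|) := by
  rw [norm_FF]
  apply Real.exp_le_exp.2
  have h1 : |u|/2 ≤ Real.log (2 * Real.cosh (u/2)) := by
    rw [← Real.log_exp (|u|/2)]
    exact Real.log_le_log (Real.exp_pos _) (exp_abs_le_twocosh u)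
  nlinarith

lemma continuous_FF (s : ℂ) : Continuous (FF s) := by
  apply Complex.continuous_exp.comp
  apply Continuous.mul continuous_const
  apply Complex.continuous_ofReal.comp
  apply Continuous.log
  · continuity
  · intro u; positivity

lemma integrable_exp_neg_abs {b : ℝ} (hb : 0 < b) :
    Integrable (fun x : ℝ => Real.exp (-b * |x|)) := by
  have h1 : IntegrableOn (fun x : ℝ => Real.exp (-b * |x|)) (Ioi 0) := by
    refine ((exp_neg_integrableOn_Ioi 0 hb)).congr_fun (fun x hx => ?_) measurableSet_Ioi
    rw [abs_of_pos hx]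
  have h2 : IntegrableOn (fun x : ℝ => Real.exp (-b * |x|)) (Iic 0) := by
    have m : MeasurableEmbedding fun x : ℝ => -x :=
      (Homeomorph.neg ℝ).measurableEmbedding
    rw [show (volume : Measure ℝ) = Measure.map (fun x => -x) volume from
      (Measure.map_neg_eq_self _).symm, IntegrableOn, m.restrict_map,
      m.integrable_map_iff]
    simp only [Function.comp_def, abs_neg, neg_preimage, neg_Iic, neg_zero]
    exact ((integrableOn_Ici_iff_integrableOn_Ioi).mpr h1)
  have := h2.union h1
  rwa [Iic_union_Ioi, integrableOn_univ] at this

lemma integrable_FF (s : ℂ) (hs : 0 < s.re) : Integrable (FF s) := by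
  refine (integrable_exp_neg_abs hs).mono' (continuous_FF s).aestronglyMeasurable ?_
  exact Eventually.of_forall (norm_FF_le s hs)



noncomputable def TT (u : ℝ) : ℝ := Real.sinh (u/2) / Real.cosh (u/2)

noncomputable def FF1 (s : ℂ) (u : ℝ) : ℂ := (-s) * (TT u : ℂ) * FF s u

noncomputable def FF2 (s : ℂ) (u : ℝ) : ℂ :=
  (-s) * ((1/(2 * Real.cosh (u/2)^2) : ℝ) : ℂ) * FF s u + ((-s) * (TT u : ℂ)) * FF1 s u

lemma hasDerivAt_TT (u : ℝ) : HasDerivAt TT (1/(2 * Real.cosh (u/2)^2)) u := by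
  have hs : HasDerivAt (fun u : ℝ => Real.sinh (u/2)) (Real.cosh (u/2) * (1/2)) u := by
    simpa [Function.comp_def] using (Real.hasDerivAt_sinh (u/2)).comp u ((hasDerivAt_id u).div_const 2)
  have hc : HasDerivAt (fun u : ℝ => Real.cosh (u/2)) (Real.sinh (u/2) * (1/2)) u := by
    simpa [Function.comp_def] using (Real.hasDerivAt_cosh (u/2)).comp u ((hasDerivAt_id u).div_const 2)
  have h := hs.div hc (ne_of_gt (Real.cosh_pos _))
  refine h.congr_deriv ?_
  have h2 := Real.cosh_sq_sub_sinh_sq (u/2)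
  have h3 : Real.cosh (u/2) ≠ 0 := ne_of_gt (Real.cosh_pos _)
  field_simp
  nlinarith

lemma hasDerivAt_logcosh (u : ℝ) :
    HasDerivAt (fun u : ℝ => Real.log (2 * Real.cosh (u/2))) (TT u / 2) u := by
  have hc : HasDerivAt (fun u : ℝ => 2 * Real.cosh (u/2)) (Real.sinh (u/2)) u := by
    have := ((Real.hasDerivAt_cosh (u/2)).comp u ((hasDerivAt_id u).div_const 2)).const_mul 2
    simpa using this.congr_deriv (by ring)
  have := hc.log (by positivity)
  convert this using 1
  rw [TT, div_div, mul_comm]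
lemma hasDerivAt_FF (s : ℂ) (u : ℝ) : HasDerivAt (FF s) (FF1 s u) u := by
  have hl : HasDerivAt (fun u : ℝ => ((Real.log (2 * Real.cosh (u/2)) : ℝ) : ℂ))
      ((TT u / 2 : ℝ) : ℂ) u := (hasDerivAt_logcosh u).ofReal_comp
  have := (hl.const_mul (-2 * s)).cexp
  refine this.congr_deriv ?_
  rw [FF1, FF]
  push_cast
  ring

lemma hasDerivAt_FF1 (s : ℂ) (u : ℝ) : HasDerivAt (FF1 s) (FF2 s u) u := by
  have ht : HasDerivAt (fun u : ℝ => ((TT u : ℝ) : ℂ))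
      ((1/(2 * Real.cosh (u/2)^2) : ℝ) : ℂ) u := (hasDerivAt_TT u).ofReal_comp
  have := ((ht.const_mul (-s)).mul (hasDerivAt_FF s u))
  exact this




lemma abs_TT_le (u : ℝ) : |TT u| ≤ 1 := by
  rw [TT, abs_div, abs_of_pos (Real.cosh_pos (u/2)), div_le_one (Real.cosh_pos (u/2))]
  have h1 := Real.sinh_lt_cosh (x := u/2)
  have h2 := Real.sinh_lt_cosh (x := -(u/2))
  rw [Real.sinh_neg, Real.cosh_neg] at h2
  rw [abs_le]; constructor <;> linarith

lemma continuous_TT : Continuous TT := by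
  apply Continuous.div (by continuity) (by continuity) (fun u => ne_of_gt (Real.cosh_pos _))

lemma continuous_FF1 (s : ℂ) : Continuous (FF1 s) := by
  exact (continuous_const.mul (Complex.continuous_ofReal.comp continuous_TT)).mul (continuous_FF s)

lemma norm_FF1_le (s : ℂ) (u : ℝ) : ‖FF1 s u‖ ≤ ‖s‖ * ‖FF s u‖ := by
  rw [FF1]
  simp only [norm_mul, norm_neg]
  have : ‖((TT u : ℝ) : ℂ)‖ ≤ 1 := by
    rw [Complex.norm_real, Real.norm_eq_abs]; exact abs_TT_le u
  calc ‖s‖ * ‖((TT u:ℝ):ℂ)‖ * ‖FF s u‖ ≤ ‖s‖ * 1 * ‖FF s u‖ := by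
        gcongr
    _ = ‖s‖ * ‖FF s u‖ := by ring

lemma norm_FF2_le (s : ℂ) (u : ℝ) : ‖FF2 s u‖ ≤ (‖s‖ + ‖s‖^2) * ‖FF s u‖ := by
  rw [FF2]
  have h1 : ‖((1/(2 * Real.cosh (u/2)^2) : ℝ) : ℂ)‖ ≤ 1 := by
    rw [Complex.norm_real, Real.norm_eq_abs, abs_of_pos (by positivity)]
    rw [div_le_one (by positivity)]
    nlinarith [Real.one_le_cosh (u/2)]
  have h2 : ‖((TT u : ℝ) : ℂ)‖ ≤ 1 := by
    rw [Complex.norm_real, Real.norm_eq_abs]; exact abs_TT_le u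
  calc ‖_ + _‖ ≤ ‖(-s) * ((1/(2 * Real.cosh (u/2)^2) : ℝ) : ℂ) * FF s u‖
        + ‖((-s) * (TT u : ℂ)) * FF1 s u‖ := norm_add_le _ _
    _ ≤ ‖s‖ * 1 * ‖FF s u‖ + ‖s‖ * 1 * (‖s‖ * ‖FF s u‖) := by
        simp only [norm_mul, norm_neg]
        gcongr <;> first | exact h1 | exact h2 | exact norm_FF1_le s u
    _ = (‖s‖ + ‖s‖^2) * ‖FF s u‖ := by ring

lemma integrable_FF1 (s : ℂ) (hs : 0 < s.re) : Integrable (FF1 s) := by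
  refine ((integrable_FF s hs).norm.const_mul ‖s‖).mono'
    (continuous_FF1 s).aestronglyMeasurable (Eventually.of_forall (norm_FF1_le s))

lemma continuous_FF2 (s : ℂ) : Continuous (FF2 s) := by
  apply Continuous.add
  · exact (continuous_const.mul (Complex.continuous_ofReal.comp (by
      apply Continuous.div continuous_const (by continuity)
        (fun u => by positivity)))).mul (continuous_FF s)
  · exact (continuous_const.mul (Complex.continuous_ofReal.comp continuous_TT)).mul
      (continuous_FF1 s)

lemma integrable_FF2 (s : ℂ) (hs : 0 < s.re) : Integrable (FF2 s) := by
  refine ((integrable_FF s hs).norm.const_mul (‖s‖ + ‖s‖^2)).mono'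
    (continuous_FF2 s).aestronglyMeasurable (Eventually.of_forall (norm_FF2_le s))

lemma fourier_FF2_eq (s : ℂ) (hs : 0 < s.re) (ξ : ℝ) :
    𝓕 (FF2 s) ξ = (2 * π * I * (ξ:ℂ))^2 • (𝓕 (FF s) ξ) := by
  have hd1 : deriv (FF s) = FF1 s := funext fun u => (hasDerivAt_FF s u).deriv
  have hd2 : deriv (FF1 s) = FF2 s := funext fun u => (hasDerivAt_FF1 s u).deriv
  have h1 : 𝓕 (FF1 s) = fun (ξ:ℝ) => (2 * π * I * (ξ:ℂ)) • (𝓕 (FF s) ξ) := by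
    rw [← hd1]
    exact Real.fourier_deriv (integrable_FF s hs)
      (fun u => (hasDerivAt_FF s u).differentiableAt) (hd1 ▸ integrable_FF1 s hs)
  have h2 : 𝓕 (FF2 s) = fun (ξ:ℝ) => (2 * π * I * (ξ:ℂ)) • (𝓕 (FF1 s) ξ) := by
    rw [← hd2]
    exact Real.fourier_deriv (integrable_FF1 s hs)
      (fun u => (hasDerivAt_FF1 s u).differentiableAt) (hd2 ▸ integrable_FF2 s hs)
  rw [h2, h1]
  simp only [smul_eq_mul]
  ring

lemma continuous_fourier_FF (s : ℂ) (hs : 0 < s.re) : Continuous (𝓕 (FF s)) :=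
  VectorFourier.fourierIntegral_continuous Real.continuous_fourierChar
    (by exact continuous_inner) (integrable_FF s hs)

lemma norm_fourier_le (f : ℝ → ℂ) (ξ : ℝ) : ‖𝓕 f ξ‖ ≤ ∫ u, ‖f u‖ :=
  VectorFourier.norm_fourierIntegral_le_integral_norm _ _ _ _ _

lemma integrable_fourier_FF (s : ℂ) (hs : 0 < s.re) : Integrable (𝓕 (FF s)) := by
  set C₀ := ∫ u, ‖FF s u‖ with hC₀
  set C₂ := (∫ u, ‖FF2 s u‖) / (4 * π^2) with hC₂
  have key : ∀ ξ : ℝ, ‖𝓕 (FF s) ξ‖ ≤ (C₀ + C₂) * (1 + ξ^2)⁻¹ := by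
    intro ξ
    have hb0 : ‖𝓕 (FF s) ξ‖ ≤ C₀ := norm_fourier_le _ ξ
    have hb2 : ξ^2 * ‖𝓕 (FF s) ξ‖ ≤ C₂ := by
      have h := fourier_FF2_eq s hs ξ
      have hn : ‖𝓕 (FF2 s) ξ‖ = (4 * π^2 * ξ^2) * ‖𝓕 (FF s) ξ‖ := by
        rw [h, smul_eq_mul, norm_mul, norm_pow]
        have hx : ‖(2 * ↑π * I * (ξ:ℂ))‖ = 2 * π * |ξ| := by
          simp [norm_mul, Complex.norm_real, abs_of_pos Real.pi_pos]
        rw [hx]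
        rw [show (2 * π * |ξ|)^2 = 4 * π^2 * |ξ|^2 by ring, _root_.sq_abs]
      have := norm_fourier_le (FF2 s) ξ
      rw [hn] at this
      rw [hC₂, le_div_iff₀ (by positivity)]
      nlinarith [norm_nonneg (𝓕 (FF s) ξ), Real.pi_pos]
    have hpos : (0:ℝ) < 1 + ξ^2 := by positivity
    rw [← div_eq_mul_inv, le_div_iff₀ hpos]
    nlinarith [norm_nonneg (𝓕 (FF s) ξ)]
  have hC₂0 : 0 ≤ C₂ := by
    rw [hC₂]
    have : 0 ≤ ∫ u, ‖FF2 s u‖ := integral_nonneg fun u => norm_nonneg _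
    positivity
  refine (integrable_inv_one_add_sq.const_mul (C₀ + C₂)).mono'
    (continuous_fourier_FF s hs).aestronglyMeasurable (Eventually.of_forall fun ξ => ?_)
  simpa using key ξ




noncomputable def PHI (u : ℝ) : ℝ := Real.exp u / (1 + Real.exp u)

lemma one_add_exp_pos (u : ℝ) : 0 < 1 + Real.exp u := by positivity

lemma PHI_pos (u : ℝ) : 0 < PHI u := div_pos (Real.exp_pos u) (one_add_exp_pos u)

lemma PHI_lt_one (u : ℝ) : PHI u < 1 := by
  rw [PHI, div_lt_one (one_add_exp_pos u)]; linarith [Real.exp_pos u]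

lemma one_sub_PHI (u : ℝ) : 1 - PHI u = 1 / (1 + Real.exp u) := by
  rw [PHI]; field_simp; ring

lemma hasDerivAt_PHI (u : ℝ) : HasDerivAt PHI (PHI u * (1 - PHI u)) u := by
  have h := (Real.hasDerivAt_exp u).div
    ((hasDerivAt_const u (1:ℝ)).add (Real.hasDerivAt_exp u)) (ne_of_gt (one_add_exp_pos u))
  refine h.congr_deriv ?_
  rw [PHI]
  simp only [Pi.add_apply]
  field_simp
  ring

lemma PHI_injOn : InjOn PHI univ := by
  intro a _ b _ hab
  rw [PHI, PHI, div_eq_div_iff (one_add_exp_pos a).ne' (one_add_exp_pos b).ne'] at hab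
  have : Real.exp a = Real.exp b := by nlinarith
  exact Real.exp_injective this

lemma PHI_image : PHI '' univ = Ioo 0 1 := by
  apply Subset.antisymm
  · rintro t ⟨u, -, rfl⟩
    exact ⟨PHI_pos u, PHI_lt_one u⟩
  · rintro t ⟨ht0, ht1⟩
    refine ⟨Real.log (t / (1 - t)), mem_univ _, ?_⟩
    have h1 : (0:ℝ) < 1 - t := by linarith
    have h2 : 0 < t / (1 - t) := div_pos ht0 h1
    rw [PHI, Real.exp_log h2]
    field_simp
    ring

lemma log_PHI (u : ℝ) : Real.log (PHI u) = u - Real.log (1 + Real.exp u) := by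
  rw [PHI, Real.log_div (Real.exp_ne_zero u) (ne_of_gt (one_add_exp_pos u)), Real.log_exp]

lemma log_one_sub_PHI (u : ℝ) : Real.log (1 - PHI u) = -Real.log (1 + Real.exp u) := by
  rw [one_sub_PHI, one_div, Real.log_inv]

-- the key pointwise identity
lemma integrand_eq (s : ℂ) (τ u : ℝ) :
    |PHI u * (1 - PHI u)| •
      ((PHI u : ℂ) ^ (s + τ * I - 1) * ((1:ℂ) - (PHI u : ℂ)) ^ (s - τ * I - 1))
    = Complex.exp (I * τ * u) * FF s u := by
  have h0 : (0:ℝ) < PHI u := PHI_pos u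
  have h1 : (0:ℝ) < 1 - PHI u := by linarith [PHI_lt_one u]
  have hne : ((PHI u : ℝ) : ℂ) ≠ 0 := by exact_mod_cast ne_of_gt h0
  have hne1 : ((1:ℂ) - (PHI u : ℂ)) ≠ 0 := by
    rw [show (1:ℂ) - (PHI u : ℂ) = ((1 - PHI u : ℝ) : ℂ) by push_cast; ring]
    exact_mod_cast ne_of_gt h1
  rw [abs_of_pos (by nlinarith), Complex.cpow_def_of_ne_zero hne,
    Complex.cpow_def_of_ne_zero hne1]
  rw [show (1:ℂ) - (PHI u : ℂ) = ((1 - PHI u : ℝ) : ℂ) by push_cast; ring]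
  rw [← Complex.ofReal_log h0.le, ← Complex.ofReal_log h1.le]
  have hsm : (PHI u * (1 - PHI u) : ℝ) • (Complex.exp (↑(Real.log (PHI u)) * (s + ↑τ * I - 1)) *
      Complex.exp (↑(Real.log (1 - PHI u)) * (s - ↑τ * I - 1)))
      = Complex.exp (↑(Real.log (PHI u)) + ↑(Real.log (1 - PHI u))) *
        (Complex.exp (↑(Real.log (PHI u)) * (s + ↑τ * I - 1)) *
         Complex.exp (↑(Real.log (1 - PHI u)) * (s - ↑τ * I - 1))) := by
    rw [real_smul, Complex.exp_add, ← Complex.ofReal_exp, ← Complex.ofReal_exp,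
      Real.exp_log h0, Real.exp_log h1]
    push_cast
    ring
  rw [hsm, FF, ← Complex.exp_add, ← Complex.exp_add, ← Complex.exp_add]
  congr 1
  rw [log_PHI, log_one_sub_PHI, log_twocosh]
  push_cast
  ring

lemma gamma_eq_fourier (s : ℂ) (hs : 0 < s.re) (τ : ℝ) :
    Complex.Gamma (s + τ * I) * Complex.Gamma (s - τ * I)
      = Complex.Gamma (2 * s) * 𝓕 (FF s) (-τ / (2 * π)) := by
  have hre1 : 0 < (s + τ * I).re := by simp [hs]
  have hre2 : 0 < (s - τ * I).re := by simp [hs]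
  have hbeta := Complex.Gamma_mul_Gamma_eq_betaIntegral hre1 hre2
  rw [show s + τ * I + (s - τ * I) = 2 * s by ring] at hbeta
  rw [hbeta]
  congr 1
  -- betaIntegral = 𝓕 (FF s) (-τ/(2π))
  rw [Complex.betaIntegral, intervalIntegral.integral_of_le zero_le_one,
    integral_Ioc_eq_integral_Ioo, ← PHI_image,
    integral_image_eq_integral_abs_deriv_smul MeasurableSet.univ
      (fun x _ => (hasDerivAt_PHI x).hasDerivWithinAt) PHI_injOn]
  rw [setIntegral_univ, Real.fourier_eq']
  refine integral_congr_ae (Eventually.of_forall fun u => ?_)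
  show _ = cexp (↑(-2 * π * (inner ℝ u (-τ / (2 * π)) : ℝ)) * I) • FF s u
  rw [show (inner ℝ u (-τ / (2 * π)) : ℝ) = u * (-τ / (2 * π)) by simp [RCLike.inner_apply, mul_comm]]
  beta_reduce
  rw [integrand_eq s τ u]
  simp only [RCLike.inner_apply, conj_trivial, smul_eq_mul]
  have hexp : (-2 * π * (u * (-τ / (2 * π))) : ℝ) = τ * u := by
    field_simp
  rw [hexp]
  congr 1
  push_cast
  ring




lemma two_exp_cos (r : ℝ) :
    Complex.exp (I * r) + Complex.exp (-(I * r)) = 2 * (Real.cos r : ℂ) := by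
  rw [Complex.ofReal_cos, Complex.cos]
  ring_nf

set_option maxHeartbeats 1000000 in
theorem stmt1 (s : ℂ) (hs : 0 < s.re) (y : ℝ) (hy : 0 < y) :
    ∫ τ in Ioi (0 : ℝ),
        Complex.Gamma (s + τ * I) * Complex.Gamma (s - τ * I) * (Real.cos (τ * y) : ℂ)
      = (π : ℂ) * Complex.Gamma (2 * s) /
        (2 ^ (2 * s) * ((Real.cosh (y / 2) : ℂ)) ^ (2 * s)) := by
  have hπ : (π : ℝ) ≠ 0 := Real.pi_ne_zero
  set g : ℝ → ℂ := fun τ => Complex.Gamma (s + τ * I) * Complex.Gamma (s - τ * I) with hg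
  have hgeq : g = fun τ => Complex.Gamma (2 * s) * 𝓕 (FF s) (-τ / (2 * π)) :=
    funext fun τ => gamma_eq_fourier s hs τ
  have hc : (-(2 * π)⁻¹ : ℝ) ≠ 0 := neg_ne_zero.mpr (inv_ne_zero (by positivity))
  have hgint : Integrable g := by
    rw [hgeq]
    have h1 : Integrable (fun τ : ℝ => 𝓕 (FF s) ((-(2 * π)⁻¹) * τ)) :=
      (integrable_fourier_FF s hs).comp_mul_left' hc
    have hfun : (fun τ : ℝ => 𝓕 (FF s) ((-(2 * π)⁻¹) * τ))
        = fun τ : ℝ => 𝓕 (FF s) (-τ / (2 * π)) := by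
      funext τ
      congr 1
      field_simp
    rw [hfun] at h1
    exact h1.const_mul _
  have hgeven : ∀ τ : ℝ, g (-τ) = g τ := by
    intro τ
    simp only [hg]
    push_cast
    rw [show s + -(τ:ℂ) * I = s - τ * I by ring, show s - -(τ:ℂ) * I = s + τ * I by ring]
    ring
  -- integrability of products with bounded factors
  have hbd : ∀ c : ℝ → ℂ, Continuous c → (∀ x, ‖c x‖ ≤ 1) →
      Integrable (fun τ => g τ * c τ) := by
    intro c hcont hb
    have := hgint.bdd_mul (c := 1) hcont.aestronglyMeasurable (Eventually.of_forall hb)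
    refine this.congr (Eventually.of_forall fun τ => mul_comm _ _)
  have hint1 : Integrable (fun τ => g τ * Complex.exp (I * τ * y)) :=
    hbd _ (by continuity) (fun x => by
      rw [show I * (x:ℂ) * y = ((x * y : ℝ):ℂ) * I by push_cast; ring]
      rw [Complex.norm_exp_ofReal_mul_I])
  have hint2 : Integrable (fun τ => g τ * Complex.exp (-(I * τ * y))) :=
    hbd _ (by continuity) (fun x => by
      rw [show -(I * (x:ℂ) * y) = ((-(x * y) : ℝ):ℂ) * I by push_cast; ring]
      rw [Complex.norm_exp_ofReal_mul_I])
  -- step 1: full-line integral equals twice the half-line integral of g·cos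
  have step1 : (∫ τ : ℝ, g τ * Complex.exp (-(I * τ * y)))
      = 2 * ∫ τ in Ioi (0:ℝ), g τ * (Real.cos (τ * y) : ℂ) := by
    have hsplit : (∫ τ : ℝ, g τ * Complex.exp (-(I * τ * y)))
        = (∫ τ in Iic (0:ℝ), g τ * Complex.exp (-(I * τ * y)))
          + ∫ τ in Ioi (0:ℝ), g τ * Complex.exp (-(I * τ * y)) := by
      rw [← setIntegral_union (Iic_disjoint_Ioi le_rfl) measurableSet_Ioi
        hint2.integrableOn hint2.integrableOn, Iic_union_Ioi, setIntegral_univ]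
    have hneg : (∫ τ in Iic (0:ℝ), g τ * Complex.exp (-(I * τ * y)))
        = ∫ τ in Ioi (0:ℝ), g τ * Complex.exp (I * τ * y) := by
      have := integral_comp_neg_Iic (0:ℝ) (fun x => g x * Complex.exp (I * x * y))
      rw [neg_zero] at this
      rw [← this]
      refine setIntegral_congr_fun measurableSet_Iic fun τ _ => ?_
      rw [hgeven τ |>.symm]
      push_cast
      ring_nf
    rw [hsplit, hneg, ← integral_add hint1.integrableOn hint2.integrableOn]
    rw [← integral_const_mul]
    refine setIntegral_congr_fun measurableSet_Ioi fun τ _ => ?_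
    have := two_exp_cos (τ * y)
    calc g τ * Complex.exp (I * τ * y) + g τ * Complex.exp (-(I * τ * y))
        = g τ * (Complex.exp (I * ((τ*y:ℝ):ℂ)) + Complex.exp (-(I * ((τ*y:ℝ):ℂ)))) := by
          push_cast; ring
      _ = 2 * (g τ * (Real.cos (τ * y):ℂ)) := by rw [this]; ring
  -- step 2: compute the full-line integral via Fourier inversion
  have step2 : (∫ τ : ℝ, g τ * Complex.exp (-(I * τ * y)))
      = 2 * π * Complex.Gamma (2 * s) * FF s y := by
    set H : ℝ → ℂ := fun σ => Complex.Gamma (2 * s) *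
      (Complex.exp (((2 * π * (σ * y) : ℝ):ℂ) * I) * 𝓕 (FF s) σ) with hH
    have hcomp : ∀ τ : ℝ, g τ * Complex.exp (-(I * τ * y)) = H ((-(2*π)⁻¹) * τ) := by
      intro τ
      rw [hH, hgeq]
      beta_reduce
      rw [show (-(2*π)⁻¹ : ℝ) * τ = -τ / (2*π) by field_simp]
      rw [show ((2 * π * ((-τ / (2*π)) * y) : ℝ):ℂ) * I = -(I * τ * y) by
        rw [show (2 * π * ((-τ / (2*π)) * y) : ℝ) = -(τ * y) by field_simp]
        push_cast; ring]
      ring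
    have hHint : (∫ σ : ℝ, H σ) = Complex.Gamma (2 * s) * FF s y := by
      rw [hH]
      rw [integral_const_mul]
      congr 1
      have hinv : 𝓕⁻ (𝓕 (FF s)) y = FF s y :=
        (integrable_FF s hs).fourierInv_fourier_eq (integrable_fourier_FF s hs)
          (continuous_FF s).continuousAt
      rw [← hinv, Real.fourierInv_eq']
      refine integral_congr_ae (Eventually.of_forall fun σ => ?_)
      simp only [RCLike.inner_apply, conj_trivial, smul_eq_mul]
      rw [mul_comm y σ]
    calc (∫ τ : ℝ, g τ * Complex.exp (-(I * τ * y)))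
        = ∫ τ : ℝ, H ((-(2*π)⁻¹) * τ) := by
          exact integral_congr_ae (Eventually.of_forall fun τ => hcomp τ)
      _ = |(-(2*π)⁻¹ : ℝ)⁻¹| • ∫ σ, H σ := MeasureTheory.Measure.integral_comp_mul_left H _
      _ = 2 * π * Complex.Gamma (2 * s) * FF s y := by
          rw [hHint, show |(-(2*π)⁻¹ : ℝ)⁻¹| = 2*π by
            rw [show ((-(2*π)⁻¹ : ℝ))⁻¹ = -(2*π) by field_simp, abs_neg,
              abs_of_pos (by positivity)]]
          rw [real_smul]
          push_cast
          ring
  -- combine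
  have hmain : (∫ τ in Ioi (0:ℝ), g τ * (Real.cos (τ * y) : ℂ))
      = π * Complex.Gamma (2 * s) * FF s y := by
    have h4 : (2:ℂ) * (∫ τ in Ioi (0:ℝ), g τ * (Real.cos (τ * y) : ℂ))
        = 2 * ((π:ℂ) * Complex.Gamma (2 * s) * FF s y) := by
      rw [← step1, step2]; ring
    exact mul_left_cancel₀ two_ne_zero h4
  rw [hmain]
  -- final algebra
  have hcosh : (0:ℝ) < 2 * Real.cosh (y/2) := by positivity
  have hlog2 : (2:ℂ) ^ (2 * s) = Complex.exp ((Real.log 2 : ℂ) * (2 * s)) := by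
    rw [Complex.cpow_def_of_ne_zero two_ne_zero]
    congr 2
    rw [show (2:ℂ) = ((2:ℝ):ℂ) by norm_num, ← Complex.ofReal_log (by norm_num : (0:ℝ) ≤ 2)]
  have hlogc : ((Real.cosh (y/2) : ℝ):ℂ) ^ (2 * s)
      = Complex.exp ((Real.log (Real.cosh (y/2)) : ℂ) * (2 * s)) := by
    rw [Complex.cpow_def_of_ne_zero (by exact_mod_cast (Real.cosh_pos (y/2)).ne')]
    rw [← Complex.ofReal_log (Real.cosh_pos (y/2)).le]
  rw [hlog2, hlogc, ← Complex.exp_add, FF]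
  rw [eq_div_iff (Complex.exp_ne_zero _)]
  rw [mul_assoc, mul_assoc, ← Complex.exp_add]
  rw [show (Real.log (2 * Real.cosh (y/2)) : ℂ) = (Real.log 2 : ℂ) + (Real.log (Real.cosh (y/2)) : ℂ) by
    rw [← Complex.ofReal_add, ← Real.log_mul (by norm_num) (Real.cosh_pos (y/2)).ne']]
  rw [show -2 * s * ((Real.log 2 : ℂ) + (Real.log (Real.cosh (y/2)) : ℂ))
      + ((Real.log 2 : ℂ) * (2*s) + (Real.log (Real.cosh (y/2)) : ℂ) * (2*s)) = 0 by ring]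
  rw [Complex.exp_zero, mul_one]

end WeberProof
end

section
/- For complex s with 0 < Re(s) < 1/2 and real τ > 0, ∫₀^∞ sin(tτ)/sinh^{2s}(t/2) dt = (sinh(πτ)/√π) · Γ(s+iτ)Γ(s−iτ)Γ(1−s)/Γ(1/2+s), and the integral converges absolutely. -/
open Complex Real MeasureTheory Set Filter

/-! Since `sinh (t/2) = e^{t/2} (1 - e^{-t}) / 2` and `sin (tτ) = (e^{itτ} - e^{-itτ}) / (2i)`, the
integrand is `2^{2s}/(2i) · (e^{-(s-iτ)t} - e^{-(s+iτ)t}) (1 - e^{-t})^{-2s}`. The substitution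
`u = e^{-t}` turns each of the two terms into a Beta integral `B(s ∓ iτ, 1 - 2s)`, convergent because
`0 < Re s < 1/2`. Euler's reflection formula turns the difference of the two Beta values into
`Γ(s+iτ) Γ(s-iτ) Γ(1-2s) · 2i cos(πs) sinh(πτ) / π`, and Legendre's duplication formula combined with
reflection at `1/2 + s` gives `2^{2s} Γ(1-2s) cos(πs) / π = Γ(1-s) / (√π Γ(1/2+s))`. -/

lemma Complex.ofReal_exp_cpow (x : ℝ) (w : ℂ) : (rexp x : ℂ) ^ w = cexp (x * w) := by
  rw [cpow_def_of_ne_zero (ofReal_ne_zero.mpr (Real.exp_pos x).ne'),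
    ← ofReal_log (Real.exp_pos x).le, Real.log_exp]

lemma Real.sinh_half_eq (t : ℝ) :
    Real.sinh (t / 2) = rexp (t / 2 - Real.log 2) * (1 - rexp (-t)) := by
  rw [Real.sinh_eq, Real.exp_sub, Real.exp_log two_pos, mul_sub, mul_one, div_mul_eq_mul_div,
    ← Real.exp_add]
  ring_nf

lemma sin_div_sinh_half_cpow (s : ℂ) (τ : ℝ) {t : ℝ} (ht : 0 < t) :
    (Real.sin (t * τ) : ℂ) / (Real.sinh (t / 2) : ℂ) ^ (2 * s) =
      (2 : ℂ) ^ (2 * s) / (2 * I) *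
        (cexp (-(s - τ * I) * t) * ((1 - rexp (-t) : ℝ) : ℂ) ^ (-(2 * s)) -
          cexp (-(s + τ * I) * t) * ((1 - rexp (-t) : ℝ) : ℂ) ^ (-(2 * s))) := by
  have hx : 0 < 1 - rexp (-t) := sub_pos.mpr (Real.exp_lt_one_iff.mpr (neg_neg_of_pos ht))
  have hxw : ((1 - rexp (-t) : ℝ) : ℂ) ^ (2 * s) ≠ 0 := by
    rw [cpow_def_of_ne_zero (ofReal_ne_zero.mpr hx.ne')]
    exact Complex.exp_ne_zero _
  have htwo : (2 : ℂ) ^ (2 * s) = cexp (Real.log 2 * (2 * s)) := by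
    rw [← ofReal_exp_cpow, Real.exp_log two_pos, ofReal_ofNat]
  have hplus : -(s - τ * I) * t =
      ((t * τ : ℝ) : ℂ) * I - ((t / 2 - Real.log 2 : ℝ) : ℂ) * (2 * s) - Real.log 2 * (2 * s) := by
    push_cast; ring
  have hminus : -(s + τ * I) * t =
      -((t * τ : ℝ) : ℂ) * I - ((t / 2 - Real.log 2 : ℝ) : ℂ) * (2 * s) - Real.log 2 * (2 * s) := by
    push_cast; ring
  rw [Real.sinh_half_eq, ofReal_mul, mul_cpow_ofReal_nonneg (Real.exp_pos _).le hx.le,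
    ofReal_exp_cpow, cpow_neg, htwo, ofReal_sin, Complex.sin, hplus, hminus,
    Complex.exp_sub, Complex.exp_sub, Complex.exp_sub, Complex.exp_sub]
  field_simp
  rw [I_sq]
  ring

lemma Real.image_exp_neg_Ioi_zero : (fun t : ℝ => rexp (-t)) '' Ioi 0 = Ioo 0 1 := by
  rw [show (fun t : ℝ => rexp (-t)) = rexp ∘ Neg.neg from rfl, image_comp, image_neg_Ioi,
    neg_zero, Real.image_exp_Iio, Real.exp_zero]

lemma Real.hasDerivWithinAt_exp_neg (s : Set ℝ) (t : ℝ) :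
    HasDerivWithinAt (fun t : ℝ => rexp (-t)) (-rexp (-t)) s t := by
  simpa using ((hasDerivAt_neg t).exp).hasDerivWithinAt

section BetaExp

variable {a b : ℂ}

lemma abs_deriv_exp_neg_smul_betaIntegrand (t : ℝ) :
    |-rexp (-t)| • ((rexp (-t) : ℂ) ^ (a - 1) * (1 - (rexp (-t) : ℂ)) ^ (b - 1)) =
      cexp (-a * t) * ((1 - rexp (-t) : ℝ) : ℂ) ^ (b - 1) := by
  rw [abs_neg, abs_of_pos (Real.exp_pos _), real_smul, ← mul_assoc, ofReal_exp_cpow,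
    ofReal_sub, ofReal_one, ofReal_exp, ← Complex.exp_add, ofReal_neg]
  ring_nf

lemma integrableOn_exp_mul_one_sub_exp_cpow (ha : 0 < a.re) (hb : 0 < b.re) :
    IntegrableOn (fun t : ℝ => cexp (-a * t) * ((1 - rexp (-t) : ℝ) : ℂ) ^ (b - 1)) (Ioi 0) := by
  have hbeta : IntegrableOn (fun u : ℝ => (u : ℂ) ^ (a - 1) * (1 - (u : ℂ)) ^ (b - 1)) (Ioo 0 1) :=
    (intervalIntegrable_iff_integrableOn_Ioo_of_le zero_le_one).mp (betaIntegral_convergent ha hb)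
  rw [← image_exp_neg_Ioi_zero, integrableOn_image_iff_integrableOn_abs_deriv_smul
    measurableSet_Ioi (fun t _ => hasDerivWithinAt_exp_neg _ t)
    (Real.exp_injective.comp neg_injective).injOn] at hbeta
  simpa only [abs_deriv_exp_neg_smul_betaIntegrand] using hbeta

lemma integral_exp_mul_one_sub_exp_cpow (ha : 0 < a.re) (hb : 0 < b.re) :
    ∫ t in Ioi (0 : ℝ), cexp (-a * t) * ((1 - rexp (-t) : ℝ) : ℂ) ^ (b - 1) =
      Gamma a * Gamma b / Gamma (a + b) := by
  have hsubst := integral_image_eq_integral_abs_deriv_smul (measurableSet_Ioi (a := 0))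
    (fun t _ => hasDerivWithinAt_exp_neg _ t) (Real.exp_injective.comp neg_injective).injOn
    (fun u : ℝ => (u : ℂ) ^ (a - 1) * (1 - (u : ℂ)) ^ (b - 1))
  simp only [abs_deriv_exp_neg_smul_betaIntegrand, image_exp_neg_Ioi_zero] at hsubst
  rw [← hsubst, ← integral_Ioc_eq_integral_Ioo, ← intervalIntegral.integral_of_le zero_le_one,
    ← betaIntegral, Gamma_mul_Gamma_eq_betaIntegral ha hb,
    mul_div_cancel_left₀ _ (Gamma_ne_zero_of_re_pos (by rw [add_re]; positivity))]

end BetaExp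

namespace Complex

-- At the integers both sides are `0`, since `Gamma (-n) = 0` and `x / 0 = 0` in Mathlib.
lemma inv_Gamma_mul_inv_Gamma_one_sub (z : ℂ) :
    (Gamma z)⁻¹ * (Gamma (1 - z))⁻¹ = sin (π * z) / π := by
  rw [← mul_inv, Gamma_mul_Gamma_one_sub, inv_div]

lemma inv_Gamma_one_sub {z : ℂ} (hz : Gamma z ≠ 0) :
    (Gamma (1 - z))⁻¹ = Gamma z * sin (π * z) / π := by
  rw [mul_div_assoc, ← inv_Gamma_mul_inv_Gamma_one_sub, mul_inv_cancel_left₀ hz]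

lemma Gamma_div_Gamma_one_sub_sub {a b : ℂ} (ha : Gamma a ≠ 0) (hb : Gamma b ≠ 0) :
    Gamma a / Gamma (1 - b) - Gamma b / Gamma (1 - a) =
      Gamma a * Gamma b * (sin (π * b) - sin (π * a)) / π := by
  rw [div_eq_mul_inv, div_eq_mul_inv, inv_Gamma_one_sub ha, inv_Gamma_one_sub hb]
  ring

lemma sin_add_mul_I_sub_sin_sub_mul_I (x y : ℂ) :
    sin (x + y * I) - sin (x - y * I) = 2 * cos x * sinh y * I := by
  rw [sin_add, sin_sub, sin_mul_I]
  ring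

lemma two_cpow_mul_Gamma_one_sub_two_mul_mul_cos {s : ℂ} (hs : Gamma (1 / 2 - s) ≠ 0) :
    (2 : ℂ) ^ (2 * s) * Gamma (1 - 2 * s) * cos (π * s) / π =
      Gamma (1 - s) / (√π * Gamma (1 / 2 + s)) := by
  have hdup := Gamma_mul_Gamma_add_half (1 / 2 - s)
  rw [show (1 : ℂ) / 2 - s + 1 / 2 = 1 - s by ring, show 2 * (1 / 2 - s) = 1 - 2 * s by ring,
    show 1 - (1 - 2 * s) = 2 * s by ring] at hdup
  have hrefl := inv_Gamma_mul_inv_Gamma_one_sub (1 / 2 + s)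
  rw [show 1 - (1 / 2 + s) = 1 / 2 - s by ring,
    show (π : ℂ) * (1 / 2 + s) = π / 2 - -(π * s) by ring, sin_pi_div_two_sub, cos_neg] at hrefl
  rw [mul_div_assoc, ← hrefl, ← mul_div_cancel_left₀ (Gamma (1 - s)) hs, hdup]
  field_simp

lemma two_cpow_div_two_I_mul_Gamma_ratio_sub {s : ℂ} (τ : ℝ) (hsub : Gamma (s - τ * I) ≠ 0)
    (hadd : Gamma (s + τ * I) ≠ 0) (hhalf : Gamma (1 / 2 - s) ≠ 0) :
    (2 : ℂ) ^ (2 * s) / (2 * I) *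
        (Gamma (s - τ * I) * Gamma (1 - 2 * s) / Gamma (s - τ * I + (1 - 2 * s)) -
          Gamma (s + τ * I) * Gamma (1 - 2 * s) / Gamma (s + τ * I + (1 - 2 * s))) =
      ((Real.sinh (π * τ) / √π : ℝ) : ℂ) *
        (Gamma (s + τ * I) * Gamma (s - τ * I) * Gamma (1 - s) / Gamma (1 / 2 + s)) := by
  have hsin : sin (π * (s + τ * I)) - sin (π * (s - τ * I)) =
      2 * cos (π * s) * sinh (π * τ) * I := by
    rw [← sin_add_mul_I_sub_sin_sub_mul_I]
    ring_nf
  rw [show s - τ * I + (1 - 2 * s) = 1 - (s + τ * I) by ring,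
    show s + τ * I + (1 - 2 * s) = 1 - (s - τ * I) by ring]
  calc _ = (2 : ℂ) ^ (2 * s) / (2 * I) * Gamma (1 - 2 * s) *
        (Gamma (s - τ * I) / Gamma (1 - (s + τ * I)) -
          Gamma (s + τ * I) / Gamma (1 - (s - τ * I))) := by
        ring
    _ = (2 : ℂ) ^ (2 * s) * Gamma (1 - 2 * s) * cos (π * s) / π *
        (Gamma (s + τ * I) * Gamma (s - τ * I) * sinh (π * τ)) := by
        rw [Gamma_div_Gamma_one_sub_sub hsub hadd, hsin]
        field_simp
    _ = _ := by
        rw [two_cpow_mul_Gamma_one_sub_two_mul_mul_cos hhalf]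
        push_cast
        ring

end Complex

theorem stmt2_general (s : ℂ) (hs1 : 0 < s.re) (hs2 : s.re < 1 / 2) (τ : ℝ) :
    IntegrableOn (fun t : ℝ => (Real.sin (t * τ) : ℂ) / ((Real.sinh (t / 2) : ℂ)) ^ (2 * s))
        (Ioi (0 : ℝ)) ∧
    ∫ t in Ioi (0 : ℝ), (Real.sin (t * τ) : ℂ) / ((Real.sinh (t / 2) : ℂ)) ^ (2 * s)
      = ((Real.sinh (π * τ) / Real.sqrt π : ℝ) : ℂ) *
        (Complex.Gamma (s + τ * I) * Complex.Gamma (s - τ * I) * Complex.Gamma (1 - s) /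
          Complex.Gamma (1 / 2 + s)) := by
  have hβ : 0 < (1 - 2 * s).re := by
    simp only [sub_re, one_re, mul_re, re_ofNat, im_ofNat, zero_mul, sub_zero, sub_pos]
    linarith
  have hsub : 0 < (s - τ * I).re := by simpa using hs1
  have hadd : 0 < (s + τ * I).re := by simpa using hs1
  have hint_sub := integrableOn_exp_mul_one_sub_exp_cpow hsub hβ
  have hint_add := integrableOn_exp_mul_one_sub_exp_cpow hadd hβ
  rw [sub_sub_cancel_left] at hint_sub hint_add
  have heq : EqOn _ _ (Ioi (0 : ℝ)) := fun _ ht => sin_div_sinh_half_cpow s τ ht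
  refine ⟨IntegrableOn.congr_fun ((hint_sub.sub hint_add).const_mul _) heq.symm measurableSet_Ioi,
    ?_⟩
  rw [setIntegral_congr_fun measurableSet_Ioi heq, integral_const_mul,
    integral_sub hint_sub hint_add, ← sub_sub_cancel_left 1 (2 * s),
    integral_exp_mul_one_sub_exp_cpow hsub hβ, integral_exp_mul_one_sub_exp_cpow hadd hβ]
  have hhalf : 0 < (1 / 2 - s).re := by
    simp only [one_div, sub_re, inv_re, re_ofNat, normSq_ofNat, div_self_mul_self', sub_pos]
    linarith
  exact two_cpow_div_two_I_mul_Gamma_ratio_sub τ (Gamma_ne_zero_of_re_pos hsub)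
    (Gamma_ne_zero_of_re_pos hadd) (Gamma_ne_zero_of_re_pos hhalf)

theorem stmt2 (s : ℂ) (hs1 : 0 < s.re) (hs2 : s.re < 1 / 2) (τ : ℝ) (hτ : 0 < τ) :
    IntegrableOn (fun t : ℝ => (Real.sin (t * τ) : ℂ) / ((Real.sinh (t / 2) : ℂ)) ^ (2 * s))
        (Ioi (0 : ℝ)) ∧
    ∫ t in Ioi (0 : ℝ), (Real.sin (t * τ) : ℂ) / ((Real.sinh (t / 2) : ℂ)) ^ (2 * s)
      = ((Real.sinh (π * τ) / Real.sqrt π : ℝ) : ℂ) *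
        (Complex.Gamma (s + τ * I) * Complex.Gamma (s - τ * I) * Complex.Gamma (1 - s) /
          Complex.Gamma (1 / 2 + s)) :=
  stmt2_general s hs1 hs2 τ
end

section
/- For real τ and real t ≥ 0, the imaginary part of J_{iτ}(√t)² satisfies |Im[J_{iτ}(√t)²]| ≤ cosh(πτ). -/
open Complex Real MeasureTheory Set Filter

private lemma myGamma_nat_add_half (k : ℕ) :
    Complex.Gamma ((k : ℂ) + 1/2) =
      (Real.sqrt π : ℂ) * (2*k).factorial / (4^k * k.factorial) := by
  induction k with
  | zero =>
      have h0 : ((0:ℕ) : ℂ) + 1/2 = (((1:ℝ)/2 : ℝ) : ℂ) := by norm_num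
      rw [h0, Complex.Gamma_ofReal, Real.Gamma_one_half_eq]
      norm_num
  | succ n ih =>
    have h1 : ((n : ℂ) + 1/2) ≠ 0 := by
      intro h
      have := congrArg Complex.re h
      simp at this
      have : (0:ℝ) ≤ (n:ℝ) := Nat.cast_nonneg n
      linarith
    have h2 : (((n+1 : ℕ) : ℂ)) + 1/2 = ((n : ℂ) + 1/2) + 1 := by push_cast; ring
    rw [h2, Complex.Gamma_add_one _ h1, ih]
    have hf1 : ((2*(n+1)).factorial : ℂ) = (2*n+2) * ((2*n+1) * ((2*n).factorial : ℂ)) := by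
      have : 2*(n+1) = (2*n+1) + 1 := by ring
      rw [this, Nat.factorial_succ, Nat.factorial_succ]
      push_cast; ring
    have hf2 : (((n+1) : ℕ).factorial : ℂ) = (n+1) * (n.factorial : ℂ) := by
      rw [Nat.factorial_succ]; push_cast; ring
    rw [hf1, hf2]
    have hne1 : ((4:ℂ)^n) ≠ 0 := by norm_num
    have hne2 : ((n.factorial : ℂ)) ≠ 0 := Nat.cast_ne_zero.mpr n.factorial_ne_zero
    have hne3 : ((n:ℂ)+1) ≠ 0 := by
      intro h; have := congrArg Complex.re h; simp at this
      have : (0:ℝ) ≤ (n:ℝ) := Nat.cast_nonneg n; linarith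
    field_simp
    ring

private lemma myAbs_Gamma_sq (τ : ℝ) :
    (norm (Complex.Gamma ((τ:ℂ) * I + 1/2)))^2 * Real.cosh (π * τ) = π := by
  set z : ℂ := (τ:ℂ) * I + 1/2 with hz
  have h1 : (1:ℂ) - z = (starRingEnd ℂ) z := by
    simp [hz, Complex.ext_iff]; norm_num
  have h := Complex.Gamma_mul_Gamma_one_sub z
  rw [h1, Complex.Gamma_conj, Complex.mul_conj] at h
  have hsin : Complex.sin ((π:ℂ) * z) = (Real.cosh (π * τ) : ℂ) := by
    have : (π:ℂ) * z = ((π * τ : ℝ) : ℂ) * I + (π:ℂ)/2 := by push_cast [hz]; ring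
    rw [this, Complex.sin_add_pi_div_two, Complex.cos_mul_I, Complex.ofReal_cosh]
  rw [hsin] at h
  have hcosh : (Real.cosh (π * τ)) ≠ 0 := (Real.cosh_pos (π * τ)).ne'
  have h2 : (Complex.normSq (Complex.Gamma z) : ℂ) * (Real.cosh (π * τ) : ℂ) = (π : ℂ) := by
    have hc : ((Real.cosh (π * τ) : ℝ) : ℂ) ≠ 0 := by exact_mod_cast hcosh
    rw [h, div_mul_cancel₀ _ hc]
  have h3 : Complex.normSq (Complex.Gamma z) * Real.cosh (π * τ) = π := by
    exact_mod_cast h2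
  rw [Complex.sq_norm]
  exact h3

private lemma myBesselJ_bound (τ : ℝ) {x : ℝ} (hx : 0 < x) :
    norm (besselJ ((τ:ℂ) * I) x) * norm (Complex.Gamma ((τ:ℂ) * I + 1/2)) ≤
      Real.sqrt π := by
  set ν : ℂ := (τ:ℂ) * I with hν
  have hνre : ν.re = 0 := by simp [hν]
  set G : ℂ := Complex.Gamma (ν + 1/2) with hG
  have hGne : G ≠ 0 := by
    apply Complex.Gamma_ne_zero_of_re_pos
    simp [hνre, Complex.add_re]
  have hsπ : (0:ℝ) < Real.sqrt π := Real.sqrt_pos.mpr Real.pi_pos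
  set C : ℂ := ((x:ℂ)/2) ^ ν / (G * (Real.sqrt π : ℂ)) with hC
  set F : ℕ → ℝ → ℂ := fun k u =>
    ((-1 : ℂ)^k * (x:ℂ)^(2*k) / ((2*k).factorial : ℂ)) *
      ((u:ℂ) ^ (((k:ℂ) + 1/2) - 1) * ((1:ℂ) - (u:ℂ)) ^ ((ν + 1/2) - 1)) with hF
  have hre_k : ∀ k : ℕ, 0 < ((k:ℂ) + 1/2).re := by
    intro k
    simp
    positivity
  have hre_ν : 0 < (ν + 1/2).re := by
    simp [hνre, Complex.add_re]
  -- integrability on Ioo 0 1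
  have hbetaInt : ∀ (w : ℂ), 0 < w.re → IntegrableOn
      (fun u : ℝ => (u:ℂ) ^ (w - 1) * ((1:ℂ) - (u:ℂ)) ^ ((ν + 1/2) - 1)) (Ioo 0 1) := by
    intro w hw
    have h2 := (Complex.betaIntegral_convergent hw hre_ν).1
    exact h2.mono_set Ioo_subset_Ioc_self
  have hint : ∀ k : ℕ, IntegrableOn (F k) (Ioo 0 1) := by
    intro k
    exact ((hbetaInt _ (hre_k k)).const_mul _)
  -- value of each integral
  have hval : ∀ k : ℕ, ∫ u in Ioo (0:ℝ) 1, F k u =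
      ((-1 : ℂ)^k * (x:ℂ)^(2*k) / ((2*k).factorial : ℂ)) *
        Complex.betaIntegral ((k:ℂ) + 1/2) (ν + 1/2) := by
    intro k
    open intervalIntegral in
    rw [← MeasureTheory.integral_Ioc_eq_integral_Ioo,
      ← integral_of_le (by norm_num : (0:ℝ) ≤ 1),
      Complex.betaIntegral, ← intervalIntegral.integral_const_mul]
  -- beta value
  have hbetaval : ∀ k : ℕ, Complex.betaIntegral ((k:ℂ) + 1/2) (ν + 1/2) =
      Complex.Gamma ((k:ℂ) + 1/2) * G / Complex.Gamma (ν + (k:ℂ) + 1) := by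
    intro k
    have hne : Complex.Gamma (((k:ℂ) + 1/2) + (ν + 1/2)) ≠ 0 := by
      apply Complex.Gamma_ne_zero_of_re_pos
      simp [hνre, Complex.add_re]
      positivity
    have h := Complex.Gamma_mul_Gamma_eq_betaIntegral (hre_k k) hre_ν
    have he : ((k:ℂ) + 1/2) + (ν + 1/2) = ν + (k:ℂ) + 1 := by ring
    rw [he] at h hne
    rw [← hG] at h
    rw [eq_div_iff hne]
    linear_combination -h
  -- term identity
  have hterm : ∀ k : ℕ,
      ((-1 : ℂ) ^ k / ((k.factorial : ℂ) * Complex.Gamma (ν + k + 1))) *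
        ((x : ℂ) / 2) ^ (ν + 2 * (k : ℂ)) = C * ∫ u in Ioo (0:ℝ) 1, F k u := by
    intro k
    have hx2 : ((x:ℂ)/2) ≠ 0 := by
      have : (x:ℂ) ≠ 0 := by exact_mod_cast hx.ne'
      simpa using this
    have h4 : ((2:ℂ))^(2*k) = 4^k := by rw [pow_mul]; norm_num
    have hsplit : ((x:ℂ)/2) ^ (ν + 2*(k:ℂ)) = ((x:ℂ)/2)^ν * ((x:ℂ)/2)^(2*k) := by
      rw [Complex.cpow_add _ _ hx2]
      congr 1
      have h5 : (2*(k:ℂ)) = ((2*k : ℕ) : ℂ) := by push_cast; ring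
      rw [h5, Complex.cpow_natCast]
    have hΓne : Complex.Gamma (ν + (k:ℂ) + 1) ≠ 0 := by
      apply Complex.Gamma_ne_zero_of_re_pos
      simp [hνre, Complex.add_re]
      positivity
    have hne1 : ((4:ℂ)^k) ≠ 0 := by norm_num
    have hne2 : ((k.factorial : ℂ)) ≠ 0 := Nat.cast_ne_zero.mpr k.factorial_ne_zero
    have hne3 : (((2*k).factorial : ℂ)) ≠ 0 := Nat.cast_ne_zero.mpr (2*k).factorial_ne_zero
    have hne4 : ((Real.sqrt π : ℝ) : ℂ) ≠ 0 := by exact_mod_cast hsπ.ne'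
    rw [hval k, hbetaval k, myGamma_nat_add_half k, hsplit, hC, div_pow, h4]
    simp only [div_mul_div_comm, mul_div_assoc', div_div, div_mul_eq_mul_div]
    rw [div_eq_div_iff (mul_ne_zero (mul_ne_zero hne2 hΓne) hne1)
      (mul_ne_zero (mul_ne_zero hGne hne4)
        (mul_ne_zero hne3 (mul_ne_zero (mul_ne_zero hne1 hne2) hΓne)))]
    ring
  -- pointwise sum
  have hpt : ∀ u ∈ Ioo (0:ℝ) 1, HasSum (fun k => F k u)
      (((u:ℂ) ^ ((1:ℂ)/2 - 1) * ((1:ℂ) - (u:ℂ)) ^ ((ν + 1/2) - 1)) *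
        Complex.cos ((x * Real.sqrt u : ℝ) : ℂ)) := by
    intro u hu
    have hu0 : (0:ℝ) < u := hu.1
    have huC : (u:ℂ) ≠ 0 := by exact_mod_cast hu0.ne'
    have hcos := (Complex.hasSum_cos (((x * Real.sqrt u : ℝ)) : ℂ)).mul_right
      ((u:ℂ) ^ ((1:ℂ)/2 - 1) * ((1:ℂ) - (u:ℂ)) ^ ((ν + 1/2) - 1))
    rw [mul_comm]
    refine (congrArg (HasSum · _) (funext fun k => ?_)).mpr hcos
    have hz : (((x * Real.sqrt u : ℝ)) : ℂ) ^ (2*k) = (x:ℂ)^(2*k) * (u:ℂ)^k := by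
      push_cast
      rw [mul_pow, pow_mul, pow_mul]
      norm_cast
      rw [Real.sq_sqrt hu0.le]
    have hexp : (u:ℂ) ^ (((k:ℂ) + 1/2) - 1) = (u:ℂ)^k * (u:ℂ) ^ ((1:ℂ)/2 - 1) := by
      have h5 : ((k:ℂ) + 1/2) - 1 = ((k:ℕ):ℂ) + ((1:ℂ)/2 - 1) := by push_cast; ring
      rw [h5, Complex.cpow_add _ _ huC, Complex.cpow_natCast]
    rw [hF]
    simp only []
    rw [hexp, hz]
    ring
  -- the dominating function
  set b : ℝ → ℝ := fun u =>
    ‖(u:ℂ) ^ ((1:ℂ)/2 - 1) * ((1:ℂ) - (u:ℂ)) ^ ((1:ℂ)/2 - 1)‖ with hb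
  have hhalf : (0:ℝ) < ((1:ℂ)/2).re := by norm_num
  have hb_int : IntegrableOn b (Ioo 0 1) := by
    have h2 := (Complex.betaIntegral_convergent hhalf hhalf).1
    exact (h2.mono_set Ioo_subset_Ioc_self).norm
  have hbval : ∀ u ∈ Ioo (0:ℝ) 1,
      b u = u ^ (-(1:ℝ)/2) * (1-u) ^ (-(1:ℝ)/2) := by
    intro u hu
    have h1 : norm ((u:ℂ) ^ ((1:ℂ)/2 - 1)) = u ^ (-(1:ℝ)/2) := by
      rw [Complex.norm_cpow_eq_rpow_re_of_pos hu.1]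
      norm_num
    have h2 : norm (((1:ℂ) - (u:ℂ)) ^ ((1:ℂ)/2 - 1)) = (1-u) ^ (-(1:ℝ)/2) := by
      have : ((1:ℂ) - (u:ℂ)) = (((1 - u : ℝ)) : ℂ) := by push_cast; ring
      rw [this, Complex.norm_cpow_eq_rpow_re_of_pos (by linarith [hu.2] : (0:ℝ) < 1 - u)]
      norm_num
    rw [hb]
    simp only [norm_mul]
    rw [h1, h2]
  -- bound on sums of norms of integrals
  have hFnorm : ∀ (k : ℕ), ∀ u ∈ Ioo (0:ℝ) 1,
      ‖F k u‖ ≤ x^(2*k) / (2*k).factorial * b u := by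
    intro k u hu
    have hu0 : (0:ℝ) < u := hu.1
    rw [hF, hbval u hu]
    simp only [norm_mul, norm_div, norm_pow, norm_neg, norm_one,
      one_pow, one_mul, Complex.norm_real, Real.norm_eq_abs, Complex.norm_natCast]
    rw [abs_of_pos hx]
    have h1 : norm ((u:ℂ) ^ (((k:ℂ) + 1/2) - 1)) = u ^ ((k:ℝ) - 1/2) := by
      rw [Complex.norm_cpow_eq_rpow_re_of_pos hu0]
      congr 1
      simp [Complex.add_re, Complex.sub_re]
      ring
    have h2 : norm (((1:ℂ) - (u:ℂ)) ^ ((ν + 1/2) - 1)) = (1-u) ^ (-(1:ℝ)/2) := by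
      have : ((1:ℂ) - (u:ℂ)) = (((1 - u : ℝ)) : ℂ) := by push_cast; ring
      rw [this, Complex.norm_cpow_eq_rpow_re_of_pos (by linarith [hu.2] : (0:ℝ) < 1 - u)]
      simp [hνre, Complex.add_re, Complex.sub_re]
      norm_num
    rw [h1, h2]
    have h3 : u ^ ((k:ℝ) - 1/2) ≤ u ^ (-(1:ℝ)/2) := by
      apply Real.rpow_le_rpow_of_exponent_ge hu0 hu.2.le
      have : (0:ℝ) ≤ (k:ℝ) := Nat.cast_nonneg k
      linarith
    have h4 : (0:ℝ) ≤ (1-u) ^ (-(1:ℝ)/2) := Real.rpow_nonneg (by linarith [hu.2]) _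
    have h5 : (0:ℝ) ≤ x^(2*k) / (2*k).factorial := by positivity
    calc x^(2*k) / (2*k).factorial * (u ^ ((k:ℝ) - 1/2) * (1-u) ^ (-(1:ℝ)/2))
        ≤ x^(2*k) / (2*k).factorial * (u ^ (-(1:ℝ)/2) * (1-u) ^ (-(1:ℝ)/2)) := by
          apply mul_le_mul_of_nonneg_left _ h5
          exact mul_le_mul_of_nonneg_right h3 h4
      _ = x^(2*k) / (2*k).factorial * (u ^ (-(1:ℝ)/2) * (1-u) ^ (-(1:ℝ)/2)) := rfl
  have hSk : ∀ k : ℕ, (∫ u in Ioo (0:ℝ) 1, ‖F k u‖) ≤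
      x^(2*k) / (2*k).factorial * ∫ u in Ioo (0:ℝ) 1, b u := by
    intro k
    rw [← MeasureTheory.integral_const_mul]
    apply MeasureTheory.setIntegral_mono_on ((hint k).norm) (hb_int.const_mul _)
      measurableSet_Ioo
    exact hFnorm k
  have hSummable : Summable (fun k : ℕ => ∫ u in Ioo (0:ℝ) 1, ‖F k u‖) := by
    apply Summable.of_nonneg_of_le
      (fun k => MeasureTheory.integral_nonneg (fun u => norm_nonneg _)) hSk
    exact ((Real.hasSum_cosh x).summable.mul_right _)
  have hsum_eq : ∑' k : ℕ, (∫ u in Ioo (0:ℝ) 1, F k u) =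
      ∫ u in Ioo (0:ℝ) 1, ∑' k : ℕ, F k u :=
    MeasureTheory.integral_tsum_of_summable_integral_norm hint hSummable
  have hJ : besselJ ν x = C * ∫ u in Ioo (0:ℝ) 1, ∑' k : ℕ, F k u := by
    rw [besselJ, tsum_congr hterm, tsum_mul_left, hsum_eq]
  -- value of ∫ b
  have hβhalf : Complex.betaIntegral (1/2) (1/2) = (π : ℂ) := by
    have h := Complex.Gamma_mul_Gamma_eq_betaIntegral hhalf hhalf
    have : (1:ℂ)/2 + 1/2 = 1 := by norm_num
    rw [this, Complex.Gamma_one, one_mul, Complex.Gamma_one_half_eq] at h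
    rw [← h, ← Complex.cpow_add _ _ (by exact_mod_cast Real.pi_ne_zero : (π:ℂ) ≠ 0)]
    norm_num
  have hgβ : ∫ u in Ioo (0:ℝ) 1, ((u:ℂ) ^ ((1:ℂ)/2 - 1) * ((1:ℂ) - (u:ℂ)) ^ ((1:ℂ)/2 - 1)) =
      Complex.betaIntegral (1/2) (1/2) := by
    open intervalIntegral in
    rw [← MeasureTheory.integral_Ioc_eq_integral_Ioo,
      ← integral_of_le (by norm_num : (0:ℝ) ≤ 1), Complex.betaIntegral]
  have hB : (∫ u in Ioo (0:ℝ) 1, b u) = π := by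
    have hgu : ∀ u ∈ Ioo (0:ℝ) 1,
        ((u:ℂ) ^ ((1:ℂ)/2 - 1) * ((1:ℂ) - (u:ℂ)) ^ ((1:ℂ)/2 - 1)) =
          (((u ^ (-(1:ℝ)/2) * (1-u) ^ (-(1:ℝ)/2) : ℝ)) : ℂ) := by
      intro u hu
      have e1 : ((1:ℂ)/2 - 1) = ((-(1:ℝ)/2 : ℝ) : ℂ) := by push_cast; norm_num
      rw [Complex.ofReal_mul, Complex.ofReal_cpow hu.1.le,
        Complex.ofReal_cpow (by linarith [hu.2] : (0:ℝ) ≤ 1 - u), e1]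
      push_cast
      ring
    have h1 : ∫ u in Ioo (0:ℝ) 1, ((u:ℂ) ^ ((1:ℂ)/2 - 1) * ((1:ℂ) - (u:ℂ)) ^ ((1:ℂ)/2 - 1)) =
        ∫ u in Ioo (0:ℝ) 1, (((u ^ (-(1:ℝ)/2) * (1-u) ^ (-(1:ℝ)/2) : ℝ)) : ℂ) :=
      MeasureTheory.setIntegral_congr_fun measurableSet_Ioo hgu
    rw [hgβ, hβhalf] at h1
    have h3 : (∫ u in Ioo (0:ℝ) 1, (((u ^ (-(1:ℝ)/2) * (1-u) ^ (-(1:ℝ)/2) : ℝ)) : ℂ)) =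
        ((∫ u in Ioo (0:ℝ) 1, (u ^ (-(1:ℝ)/2) * (1-u) ^ (-(1:ℝ)/2)) : ℝ) : ℂ) :=
      integral_ofReal
    rw [h3] at h1
    have h2 : (∫ u in Ioo (0:ℝ) 1, (u ^ (-(1:ℝ)/2) * (1-u) ^ (-(1:ℝ)/2))) = π := by
      exact_mod_cast h1.symm
    rw [← h2]
    exact MeasureTheory.setIntegral_congr_fun measurableSet_Ioo hbval
  -- final bound
  have hS_ae : ∀ᵐ u ∂(volume.restrict (Ioo (0:ℝ) 1)), ‖∑' k : ℕ, F k u‖ ≤ b u := by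
    rw [MeasureTheory.ae_restrict_iff' measurableSet_Ioo]
    apply MeasureTheory.ae_of_all
    intro u hu
    rw [(hpt u hu).tsum_eq]
    simp only [norm_mul]
    have hcos1 : norm (Complex.cos ((x * Real.sqrt u : ℝ) : ℂ)) ≤ 1 := by
      rw [← Complex.ofReal_cos, Complex.norm_real, Real.norm_eq_abs]
      exact Real.abs_cos_le_one _
    have hbnn : (0:ℝ) ≤ norm ((u:ℂ) ^ ((1:ℂ)/2 - 1)) *
        norm (((1:ℂ) - (u:ℂ)) ^ ((ν + 1/2) - 1)) := by positivity
    have habs : norm (((1:ℂ) - (u:ℂ)) ^ ((ν + 1/2) - 1)) =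
        norm (((1:ℂ) - (u:ℂ)) ^ ((1:ℂ)/2 - 1)) := by
      have he : ((1:ℂ) - (u:ℂ)) = (((1 - u : ℝ)) : ℂ) := by push_cast; ring
      rw [he, Complex.norm_cpow_eq_rpow_re_of_pos (by linarith [hu.2] : (0:ℝ) < 1 - u),
        Complex.norm_cpow_eq_rpow_re_of_pos (by linarith [hu.2] : (0:ℝ) < 1 - u)]
      congr 1
      simp [hνre, Complex.add_re, Complex.sub_re]
    calc norm ((u:ℂ) ^ ((1:ℂ)/2 - 1)) *
          norm (((1:ℂ) - (u:ℂ)) ^ ((ν + 1/2) - 1)) *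
          norm (Complex.cos ((x * Real.sqrt u : ℝ) : ℂ))
        ≤ norm ((u:ℂ) ^ ((1:ℂ)/2 - 1)) *
          norm (((1:ℂ) - (u:ℂ)) ^ ((ν + 1/2) - 1)) * 1 := by
          exact mul_le_mul_of_nonneg_left hcos1 hbnn
      _ = b u := by
          rw [mul_one, hb, habs]
          simp only [norm_mul]
  have hIb : ‖∫ u in Ioo (0:ℝ) 1, ∑' k : ℕ, F k u‖ ≤ π := by
    rw [← hB]
    exact MeasureTheory.norm_integral_le_of_norm_le hb_int hS_ae
  have hCabs : norm C = 1 / (norm G * Real.sqrt π) := by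
    rw [hC]
    rw [norm_div, norm_mul]
    have : ((x:ℂ)/2) = (((x/2 : ℝ)) : ℂ) := by push_cast; ring
    rw [this, Complex.norm_cpow_eq_rpow_re_of_pos (by linarith : (0:ℝ) < x/2), hνre,
      Real.rpow_zero, Complex.norm_real, Real.norm_eq_abs, abs_of_pos hsπ]
  have hGpos : 0 < norm G := by
    exact norm_pos_iff.mpr hGne
  calc norm (besselJ ν x) * norm G
      = norm C * ‖∫ u in Ioo (0:ℝ) 1, ∑' k : ℕ, F k u‖ * norm G := by
        rw [hJ, norm_mul]
    _ ≤ norm C * π * norm G := by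
        apply mul_le_mul_of_nonneg_right _ (norm_nonneg _)
        exact mul_le_mul_of_nonneg_left hIb (norm_nonneg _)
    _ = Real.sqrt π := by
        rw [hCabs]
        rw [div_mul_eq_mul_div, one_mul, div_mul_eq_mul_div, mul_comm (norm G) (Real.sqrt π),
          mul_div_assoc]
        field_simp
        rw [Real.sq_sqrt Real.pi_pos.le]

theorem stmt7 (τ : ℝ) (t : ℝ) (ht : 0 ≤ t) :
    |((besselJ ((τ : ℂ) * I) (Real.sqrt t)) ^ 2).im| ≤ Real.cosh (π * τ) := by
  have hcoshpos : (0:ℝ) < Real.cosh (π * τ) := Real.cosh_pos (π * τ)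
  rcases eq_or_lt_of_le ht with h0 | hpos
  · -- t = 0
    subst h0
    rw [Real.sqrt_zero]
    by_cases hτ : τ = 0
    · subst hτ
      have hJ : besselJ ((0:ℝ) * I) 0 = 1 := by
        rw [besselJ]
        rw [tsum_eq_single 0 ?_]
        · norm_num [Complex.Gamma_one]
        · intro k hk
          have h02 : ((0:ℝ):ℂ)/2 = 0 := by norm_num
          rw [h02, Complex.zero_cpow ?_, mul_zero]
          simp only [Complex.ofReal_zero, zero_mul, zero_add]
          intro h
          apply hk
          have := congrArg Complex.re h
          simp at this
          exact_mod_cast this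
      rw [hJ]
      norm_num
    · have hJ : besselJ ((τ:ℝ) * I) 0 = 0 := by
        rw [besselJ]
        have hz : ∀ k : ℕ, ((-1 : ℂ) ^ k / ((k.factorial : ℂ) *
            Complex.Gamma ((τ:ℂ) * I + k + 1))) *
            (((0:ℝ):ℂ) / 2) ^ ((τ:ℂ) * I + 2 * (k : ℂ)) = 0 := by
          intro k
          have h02 : ((0:ℝ):ℂ)/2 = 0 := by norm_num
          rw [h02, Complex.zero_cpow ?_, mul_zero]
          intro h
          apply hτ
          have := congrArg Complex.im h
          simpa using this
        rw [tsum_congr hz]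
        simp
      rw [hJ]
      norm_num
      positivity
  · -- t > 0
    have hx : 0 < Real.sqrt t := Real.sqrt_pos.mpr hpos
    have h1 := myBesselJ_bound τ hx
    have h2 := myAbs_Gamma_sq τ
    set aJ := norm (besselJ ((τ:ℂ) * I) (Real.sqrt t)) with haJ
    set aG := norm (Complex.Gamma ((τ:ℂ) * I + 1/2)) with haG
    have haGpos : 0 < aG := by
      apply norm_pos_iff.mpr
      apply Complex.Gamma_ne_zero_of_re_pos
      simp [Complex.add_re]
    have haJnn : 0 ≤ aJ := norm_nonneg _
    have hsq : aJ^2 * aG^2 ≤ π := by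
      have hmul := mul_le_mul h1 h1 (by positivity) (Real.sqrt_nonneg _)
      calc aJ^2 * aG^2 = (aJ * aG) * (aJ * aG) := by ring
        _ ≤ Real.sqrt π * Real.sqrt π := hmul
        _ = π := Real.mul_self_sqrt Real.pi_pos.le
    have hfinal : aJ^2 ≤ Real.cosh (π * τ) := by
      nlinarith [hsq, h2, haGpos, sq_nonneg aG, mul_pos haGpos haGpos]
    calc |((besselJ ((τ:ℂ) * I) (Real.sqrt t)) ^ 2).im|
        ≤ norm ((besselJ ((τ:ℂ) * I) (Real.sqrt t)) ^ 2) := Complex.abs_im_le_norm _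
      _ = aJ ^ 2 := by rw [norm_pow]
      _ ≤ Real.cosh (π * τ) := hfinal
end

section
/- For complex z with 0 < Re(z) ≤ μ and real y > 0, the modified Bessel function of the first kind satisfies |I_z(y)| ≤ I_{Re z}(y) · e^{π|Im z|/2}. -/
open Complex Real MeasureTheory Set Filter

/-!
Termwise, `‖(y/2)^(z + 2k)‖ = (y/2)^(Re z + 2k)`, so it suffices to bound the Gamma
factors: `Γ(Re s) ≤ ‖Γ(s)‖ e^{π|Im s|/2}` for `Re s ≥ 1`. In Gauss's product for `Γ` this
compares `∏ ‖s + j‖` with `∏ (Re s + j)`, and the squared ratio of the factors is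
`1 + (Im s)²/(Re s + j)² ≤ 1 + (Im s)²/(j + 1)²`. By Euler's sine product at `i t` the
product of the latter is at most `sinh(π|t|)/(π|t|) ≤ e^{π|t|}`. At real order all terms of
the series are nonnegative reals, so `‖I_{Re z}(y)‖` is the sum of the norms of its terms.
-/

open Finset Topology

theorem Real.sinh_le_mul_exp (u : ℝ) : Real.sinh u ≤ u * Real.exp u := by
  have h := Real.add_one_le_exp (-(2 * u))
  have hsplit : Real.sinh u = Real.exp u * (1 - Real.exp (-(2 * u))) / 2 := by
    rw [Real.sinh_eq, mul_sub, mul_one, ← Real.exp_add]; ring_nf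
  rw [hsplit]
  nlinarith [Real.exp_pos u]

theorem tendsto_prod_one_add_sq_div_sq {t : ℝ} (ht : t ≠ 0) :
    Tendsto (fun n : ℕ ↦ ∏ j ∈ range n, (1 + t ^ 2 / ((j : ℝ) + 1) ^ 2)) atTop
      (𝓝 (Real.sinh (π * t) / (π * t))) := by
  have hπt : (π * t : ℂ) * I ≠ 0 := by simp [ht, Real.pi_ne_zero]
  have h := (Complex.continuous_re.tendsto _).comp
    ((Complex.tendsto_euler_sin_prod (t * I)).div_const ((π * t : ℂ) * I))
  convert h using 1
  · ext n
    simp only [Function.comp_apply]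
    rw [show (π : ℂ) * (t * I) = (π * t : ℂ) * I by ring, mul_div_cancel_left₀ _ hπt,
      ← Complex.ofReal_re (∏ j ∈ range n, _), Complex.ofReal_prod]
    congr 1
    refine prod_congr rfl fun j _ ↦ ?_
    push_cast
    rw [mul_pow, I_sq]
    ring
  · rw [show (π : ℂ) * (t * I) = (π * t : ℝ) * I by push_cast; ring, Complex.sin_mul_I,
      show (π : ℂ) * t * I = (π * t : ℝ) * I by push_cast; ring,
      mul_div_mul_right _ _ I_ne_zero, ← Complex.ofReal_sinh, ← Complex.ofReal_div,
      Complex.ofReal_re]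

theorem prod_one_add_sq_div_sq_le_exp (t : ℝ) (n : ℕ) :
    ∏ j ∈ range n, (1 + t ^ 2 / ((j : ℝ) + 1) ^ 2) ≤ Real.exp (π * |t|) := by
  rcases eq_or_ne t 0 with rfl | ht
  · simp
  have hmono : Monotone fun m : ℕ ↦ ∏ j ∈ range m, (1 + |t| ^ 2 / ((j : ℝ) + 1) ^ 2) := by
    refine monotone_nat_of_le_succ fun m ↦ ?_
    rw [prod_range_succ]
    exact le_mul_of_one_le_right (prod_nonneg fun j _ ↦ by positivity)
      (le_add_of_nonneg_right (by positivity))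
  have hπt : 0 < π * |t| := by positivity
  calc ∏ j ∈ range n, (1 + t ^ 2 / ((j : ℝ) + 1) ^ 2)
      = ∏ j ∈ range n, (1 + |t| ^ 2 / ((j : ℝ) + 1) ^ 2) := by rw [sq_abs]
    _ ≤ Real.sinh (π * |t|) / (π * |t|) :=
      hmono.ge_of_tendsto (tendsto_prod_one_add_sq_div_sq (abs_ne_zero.mpr ht)) n
    _ ≤ Real.exp (π * |t|) := by
      rw [div_le_iff₀ hπt]; exact (Real.sinh_le_mul_exp _).trans_eq (mul_comm _ _)

theorem sq_norm_add_natCast_le {s : ℂ} (hs : 1 ≤ s.re) (j : ℕ) :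
    ‖s + j‖ ^ 2 ≤ ‖(s.re : ℂ) + j‖ ^ 2 * (1 + s.im ^ 2 / ((j : ℝ) + 1) ^ 2) := by
  have hre : (s.re : ℂ) + j = ((s.re + j : ℝ) : ℂ) := by push_cast; ring
  have hj : (j : ℝ) + 1 ≤ s.re + j := by linarith
  rw [hre, Complex.norm_real, Real.norm_of_nonneg (by positivity), Complex.sq_norm,
    Complex.normSq_apply]
  simp only [add_re, natCast_re, add_im, natCast_im, add_zero]
  have h : s.im ^ 2 / (s.re + j) ^ 2 ≤ s.im ^ 2 / ((j : ℝ) + 1) ^ 2 := by gcongr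
  calc (s.re + j) * (s.re + j) + s.im * s.im
      = (s.re + j) ^ 2 * (1 + s.im ^ 2 / (s.re + j) ^ 2) := by field_simp
    _ ≤ _ := by gcongr

theorem prod_norm_add_natCast_le {s : ℂ} (hs : 1 ≤ s.re) (n : ℕ) :
    ∏ j ∈ range n, ‖s + j‖ ≤
      (∏ j ∈ range n, ‖(s.re : ℂ) + j‖) * Real.exp (π * |s.im| / 2) := by
  refine le_of_pow_le_pow_left₀ two_ne_zero (by positivity) ?_
  calc (∏ j ∈ range n, ‖s + j‖) ^ 2
      ≤ ∏ j ∈ range n, ‖(s.re : ℂ) + j‖ ^ 2 * (1 + s.im ^ 2 / ((j : ℝ) + 1) ^ 2) := by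
        rw [← Finset.prod_pow]
        exact prod_le_prod (fun j _ ↦ by positivity) fun j _ ↦ sq_norm_add_natCast_le hs j
    _ ≤ (∏ j ∈ range n, ‖(s.re : ℂ) + j‖) ^ 2 * Real.exp (π * |s.im|) := by
        rw [prod_mul_distrib, Finset.prod_pow]
        gcongr
        exact prod_one_add_sq_div_sq_le_exp _ _
    _ = _ := by
        rw [mul_pow, ← Real.exp_nat_mul]; ring_nf

namespace Complex

theorem norm_GammaSeq {n : ℕ} (hn : 0 < n) (s : ℂ) :
    ‖GammaSeq s n‖ = (n : ℝ) ^ s.re * n.factorial / ∏ j ∈ range (n + 1), ‖s + j‖ := by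
  rw [GammaSeq, norm_div, norm_mul, norm_prod, norm_natCast_cpow_of_pos hn, norm_natCast]

theorem norm_GammaSeq_re_le {s : ℂ} (hs : 1 ≤ s.re) {n : ℕ} (hn : 0 < n) :
    ‖GammaSeq s.re n‖ ≤ ‖GammaSeq s n‖ * Real.exp (π * |s.im| / 2) := by
  have hpos : ∀ w : ℂ, 0 < w.re → 0 < ∏ j ∈ range (n + 1), ‖w + j‖ := fun w hw ↦
    prod_pos fun j _ ↦ norm_pos_iff.mpr <| ne_of_apply_ne re <| by
      simp only [add_re, natCast_re, zero_re]; positivity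
  rw [norm_GammaSeq hn, norm_GammaSeq hn, ofReal_re, div_mul_eq_mul_div,
    div_le_div_iff₀ (hpos _ (by rw [ofReal_re]; linarith)) (hpos _ (by linarith)),
    mul_assoc _ (Real.exp _), mul_comm (Real.exp _)]
  gcongr
  exact prod_norm_add_natCast_le hs _

theorem norm_Gamma_re_le {s : ℂ} (hs : 1 ≤ s.re) :
    ‖Gamma s.re‖ ≤ ‖Gamma s‖ * Real.exp (π * |s.im| / 2) :=
  le_of_tendsto_of_tendsto (GammaSeq_tendsto_Gamma _).norm
    ((GammaSeq_tendsto_Gamma s).norm.mul_const _)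
    (eventually_atTop.mpr ⟨1, fun _ hn ↦ norm_GammaSeq_re_le hs hn⟩)

end Complex

theorem Real.factorial_mul_Gamma_add_one_le {x : ℝ} (hx : 0 ≤ x) (k : ℕ) :
    k.factorial * Real.Gamma (x + 1) ≤ Real.Gamma (x + k + 1) := by
  induction k with
  | zero => simp
  | succ k ih =>
    push_cast [Nat.factorial_succ]
    rw [mul_assoc, show x + (k + 1) + 1 = (x + k + 1) + 1 by ring,
      Real.Gamma_add_one (by positivity : 0 < x + k + 1).ne']
    gcongr
    linarith

noncomputable def besselITerm (ν : ℂ) (x : ℝ) (k : ℕ) : ℂ :=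
  (1 / ((k.factorial : ℂ) * Complex.Gamma (ν + k + 1))) * ((x : ℂ) / 2) ^ (ν + 2 * (k : ℂ))

theorem besselI_eq_tsum (ν : ℂ) (x : ℝ) : besselI ν x = ∑' k, besselITerm ν x k := rfl

theorem norm_besselITerm (ν : ℂ) {x : ℝ} (hx : 0 < x) (k : ℕ) :
    ‖besselITerm ν x k‖ =
      (x / 2) ^ (ν.re + 2 * k) / (k.factorial * ‖Complex.Gamma (ν + k + 1)‖) := by
  rw [besselITerm, norm_mul, norm_div, norm_one, norm_mul, Complex.norm_natCast,
    show (x : ℂ) / 2 = ((x / 2 : ℝ) : ℂ) by push_cast; ring,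
    norm_cpow_eq_rpow_re_of_pos (by positivity)]
  simp only [add_re, mul_re, re_ofNat, natCast_re, im_ofNat, natCast_im, mul_zero, sub_zero]
  ring

theorem besselITerm_ofReal (a : ℝ) {x : ℝ} (hx : 0 ≤ x) (k : ℕ) :
    besselITerm a x k = ((x / 2) ^ (a + 2 * k) / (k.factorial * Real.Gamma (a + k + 1)) : ℝ) := by
  rw [besselITerm, show (a : ℂ) + k + 1 = (a + k + 1 : ℝ) by push_cast; ring,
    Complex.Gamma_ofReal,
    show (x : ℂ) / 2 = ((x / 2 : ℝ) : ℂ) by push_cast; ring,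
    show (a : ℂ) + 2 * k = (a + 2 * k : ℝ) by push_cast; ring, ← ofReal_cpow (by positivity)]
  push_cast
  ring

theorem norm_besselITerm_ofReal {a : ℝ} (ha : 0 ≤ a) {x : ℝ} (hx : 0 < x) (k : ℕ) :
    ‖besselITerm a x k‖ = (x / 2) ^ (a + 2 * k) / (k.factorial * Real.Gamma (a + k + 1)) := by
  rw [besselITerm_ofReal a hx.le, norm_real, Real.norm_of_nonneg (by positivity)]

theorem norm_besselI_ofReal {a : ℝ} (ha : 0 ≤ a) {x : ℝ} (hx : 0 < x) :
    ‖besselI a x‖ = ∑' k, ‖besselITerm a x k‖ := by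
  simp_rw [besselI_eq_tsum, norm_besselITerm_ofReal ha hx, besselITerm_ofReal a hx.le]
  rw [← ofReal_tsum, norm_real, Real.norm_of_nonneg (tsum_nonneg fun _ ↦ by positivity)]

theorem summable_norm_besselITerm_ofReal {a : ℝ} (ha : 0 ≤ a) {x : ℝ} (hx : 0 < x) :
    Summable fun k ↦ ‖besselITerm a x k‖ := by
  refine Summable.of_nonneg_of_le (fun _ ↦ norm_nonneg _) (fun k ↦ ?_)
    ((Real.summable_pow_div_factorial ((x / 2) ^ 2)).mul_left ((x / 2) ^ a / Real.Gamma (a + 1)))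
  have hpow : (x / 2) ^ (a + 2 * k) = (x / 2) ^ a * ((x / 2) ^ 2) ^ k := by
    rw [Real.rpow_add (by positivity), ← pow_mul, ← Real.rpow_natCast]; push_cast; ring_nf
  have hΓ : Real.Gamma (a + 1) ≤ Real.Gamma (a + k + 1) :=
    (le_mul_of_one_le_left (by positivity) (Nat.one_le_cast.mpr k.factorial_pos)).trans
      (Real.factorial_mul_Gamma_add_one_le ha k)
  calc ‖besselITerm a x k‖
      = (x / 2) ^ a * ((x / 2) ^ 2) ^ k / (k.factorial * Real.Gamma (a + k + 1)) := by
        rw [norm_besselITerm_ofReal ha hx, hpow]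
    _ ≤ (x / 2) ^ a * ((x / 2) ^ 2) ^ k / (k.factorial * Real.Gamma (a + 1)) := by gcongr
    _ = _ := by ring

theorem norm_besselITerm_le {ν : ℂ} (hν : 0 ≤ ν.re) {x : ℝ} (hx : 0 < x) (k : ℕ) :
    ‖besselITerm ν x k‖ ≤ ‖besselITerm ν.re x k‖ * Real.exp (π * |ν.im| / 2) := by
  have hre : (ν + k + 1).re = ν.re + k + 1 := by simp only [add_re, natCast_re, one_re]
  have hΓ : ‖Complex.Gamma (ν.re + k + 1)‖ ≤
      ‖Complex.Gamma (ν + k + 1)‖ * Real.exp (π * |ν.im| / 2) := by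
    simpa [hre] using Complex.norm_Gamma_re_le (s := ν + k + 1)
      (by rw [hre]; linarith [k.cast_nonneg (α := ℝ)])
  have h0 : 0 < ‖Complex.Gamma (ν.re + k + 1)‖ :=
    norm_pos_iff.mpr (Complex.Gamma_ne_zero_of_re_pos <| by
      simp only [add_re, ofReal_re, natCast_re, one_re]; positivity)
  rw [norm_besselITerm _ hx, norm_besselITerm _ hx, ofReal_re]
  calc (x / 2) ^ (ν.re + 2 * k) / (k.factorial * ‖Complex.Gamma (ν + k + 1)‖)
      = (x / 2) ^ (ν.re + 2 * k) /
          (k.factorial * (‖Complex.Gamma (ν + k + 1)‖ * Real.exp (π * |ν.im| / 2))) *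
          Real.exp (π * |ν.im| / 2) := by
        field_simp
    _ ≤ _ := by gcongr

theorem stmt8_general (z : ℂ) (hz1 : 0 < z.re) (y : ℝ) (hy : 0 < y) :
    ‖besselI z y‖ ≤
      ‖besselI ((z.re : ℂ)) y‖ * Real.exp (π * |z.im| / 2) := by
  have hsum := (summable_norm_besselITerm_ofReal hz1.le hy).mul_right (Real.exp (π * |z.im| / 2))
  calc ‖besselI z y‖
      ≤ ∑' k, ‖besselITerm z.re y k‖ * Real.exp (π * |z.im| / 2) :=
        tsum_of_norm_bounded hsum.hasSum (norm_besselITerm_le hz1.le hy)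
    _ = ‖besselI z.re y‖ * Real.exp (π * |z.im| / 2) := by
        rw [tsum_mul_right, norm_besselI_ofReal hz1.le hy]

theorem stmt8 (μ : ℝ) (z : ℂ) (hz1 : 0 < z.re) (hz2 : z.re ≤ μ) (y : ℝ) (hy : 0 < y) :
    ‖besselI z y‖ ≤
      ‖besselI ((z.re : ℂ)) y‖ * Real.exp (π * |z.im| / 2) :=
  stmt8_general z hz1 y hy
end
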